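/- arXiv:2508.21500 — 13 statements merged into one kernel-verified Lean document; each statement's English description precedes it below -/
import Mathlib

section
/- Let G be a nontrivial totally ordered Specker ℓ-group, i.e., a nontrivial linearly ordered abelian group that is generated, as a group, by its set of singular elements. Then there exists a unique map φ : G → ℤ that is simultaneously a group isomorphism and an order isomorphism onto ℤ with its natural order. -/
/-- An element `s` of an abelian ℓ-group is singular if `0 ≤ s` and
`a ⊓ (s - a) = 0` for all `0 ≤ a ≤ s`. -/
def IsSingular {G : Type*} [Lattice G] [AddCommGroup G] (s : G) : Prop :=
  0 ≤ s ∧ ∀ a : G, 0 ≤ a → a ≤ s → a ⊓ (s - a) = 0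

/-!
In a chain, `a ⊓ (s - a) = 0` forces `a = 0` or `a = s`, so a singular element has nothing
strictly between itself and `0`. Hence any two nonzero singular elements are comparable and
therefore equal, and a Specker group is generated by a single positive element: it is infinite
cyclic, i.e. isomorphic to `ℤ` as an ordered group. Uniqueness holds because `ℤ` has no
nontrivial order-preserving group automorphism.
-/

section IsSingular

variable {G : Type*} [AddCommGroup G]

theorem exists_isSingular_ne_zero [Lattice G] [Nontrivial G]
    (hSpecker : AddSubgroup.closure {s : G | IsSingular s} = ⊤) :
    ∃ s : G, IsSingular s ∧ s ≠ 0 := by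
  by_contra! h
  have hbot : AddSubgroup.closure {s : G | IsSingular s} = ⊥ :=
    AddSubgroup.closure_eq_bot_iff.mpr h
  exact bot_ne_top (hbot.symm.trans hSpecker)

variable [LinearOrder G]

theorem IsSingular.eq_zero_or_eq {s a : G} (hs : IsSingular s) (ha : 0 ≤ a) (has : a ≤ s) :
    a = 0 ∨ a = s := by
  have h := hs.2 a ha has
  rcases le_total a (s - a) with h' | h'
  · exact .inl (by rwa [inf_eq_left.mpr h'] at h)
  · exact .inr (sub_eq_zero.mp (by rwa [inf_eq_right.mpr h'] at h)).symm

theorem IsSingular.mem_zmultiples {s t : G} (hs : IsSingular s) (hs0 : s ≠ 0)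
    (ht : IsSingular t) : t ∈ AddSubgroup.zmultiples s := by
  rcases le_total t s with hts | hst
  · rcases hs.eq_zero_or_eq ht.1 hts with rfl | rfl
    · exact zero_mem _
    · exact AddSubgroup.mem_zmultiples t
  · rcases ht.eq_zero_or_eq hs.1 hst with h0 | rfl
    · exact absurd h0 hs0
    · exact AddSubgroup.mem_zmultiples s

theorem isAddCyclic_of_closure_isSingular_eq_top [Nontrivial G]
    (hSpecker : AddSubgroup.closure {s : G | IsSingular s} = ⊤) : IsAddCyclic G := by
  obtain ⟨s, hs, hs0⟩ := exists_isSingular_ne_zero hSpecker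
  have hle : AddSubgroup.closure {t : G | IsSingular t} ≤ AddSubgroup.zmultiples s :=
    (AddSubgroup.closure_le _).mpr fun t ht => hs.mem_zmultiples hs0 ht
  rw [hSpecker] at hle
  exact ⟨s, fun x => hle (AddSubgroup.mem_top x)⟩

end IsSingular

theorem OrderAddMonoidIso.existsUnique_int {G : Type*} [AddCommGroup G] [PartialOrder G]
    (e : G ≃+o ℤ) :
    ∃! φ : G → ℤ, Function.Bijective φ ∧ (∀ x y : G, φ (x + y) = φ x + φ y) ∧
      (∀ x y : G, x ≤ y ↔ φ x ≤ φ y) := by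
  refine ⟨e, ⟨e.bijective, map_add e, fun x y => (map_le_map_iff e).symm⟩, ?_⟩
  rintro ψ ⟨hbij, hadd, hle⟩
  let ψ' : G ≃+o ℤ :=
    { Equiv.ofBijective ψ hbij with
      map_add' := hadd
      map_le_map_iff' := (hle _ _).symm }
  have h : e.symm.trans ψ' = OrderAddMonoidIso.refl ℤ := Subsingleton.elim _ _
  funext x
  exact (by simpa using congrArg (fun f : ℤ ≃+o ℤ => f (e x)) h : ψ' x = e x)

/-- A nontrivial totally ordered Specker ℓ-group admits a unique map to `ℤ`
that is simultaneously a group isomorphism and an order isomorphism. -/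
theorem stmt1 {G : Type*} [AddCommGroup G] [LinearOrder G] [IsOrderedAddMonoid G] [Nontrivial G]
    (hSpecker : AddSubgroup.closure {s : G | IsSingular s} = ⊤) :
    ∃! φ : G → ℤ, Function.Bijective φ ∧ (∀ x y : G, φ (x + y) = φ x + φ y) ∧
      (∀ x y : G, x ≤ y ↔ φ x ≤ φ y) := by
  have := isAddCyclic_of_closure_isSingular_eq_top hSpecker
  obtain ⟨e⟩ := LinearOrderedAddCommGroup.isAddCyclic_iff_nonempty_equiv_int.mp this
  exact e.existsUnique_int
end

section
/- Any surjective ℓ-homomorphism between abelian ℓ-groups maps singular elements to singular elements: if f : S → T is a surjective ℓ-homomorphism and s ∈ S is singular, then f(s) is singular in T. -/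
open Set Function

theorem LatticeHom.surjOn_Icc {α β : Type*} [Lattice α] [Lattice β] (f : LatticeHom α β)
    (hf : Surjective f) {a b : α} (hab : a ≤ b) : SurjOn f (Icc a b) (Icc (f a) (f b)) := by
  rintro y ⟨hay, hyb⟩
  obtain ⟨x, rfl⟩ := hf y
  refine ⟨(x ⊔ a) ⊓ b, ⟨le_inf le_sup_right hab, inf_le_right⟩, ?_⟩
  rw [map_inf, map_sup, sup_eq_left.2 hay, inf_eq_left.2 hyb]

theorem stmt2_general {S T : Type*}
    [Lattice S] [AddCommGroup S]
    [Lattice T] [AddCommGroup T]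
    (f : S → T)
    (hadd : ∀ x y : S, f (x + y) = f x + f y)
    (hsup : ∀ x y : S, f (x ⊔ y) = f x ⊔ f y)
    (hinf : ∀ x y : S, f (x ⊓ y) = f x ⊓ f y)
    (hsurj : Function.Surjective f)
    (s : S) (hs : IsSingular s) : IsSingular (f s) := by
  let φ : S →+ T := AddMonoidHom.mk' f hadd
  let ψ : LatticeHom S T := ⟨⟨f, hsup⟩, hinf⟩
  have hψ0 : ψ 0 = 0 := map_zero φ
  have hψsub : ∀ x y : S, ψ (x - y) = ψ x - ψ y := map_sub φ
  change IsSingular (ψ s)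
  refine ⟨hψ0 ▸ OrderHomClass.mono ψ hs.1, ?_⟩
  intro b hb0 hbs
  obtain ⟨a, ⟨ha0, has⟩, rfl⟩ := ψ.surjOn_Icc hsurj hs.1 ⟨hψ0 ▸ hb0, hbs⟩
  rw [← hψsub, ← map_inf, hs.2 a ha0 has, hψ0]

/-- A surjective ℓ-homomorphism between abelian ℓ-groups maps singular
elements to singular elements. -/
theorem stmt2 {S T : Type*}
    [Lattice S] [AddCommGroup S] [CovariantClass S S (· + ·) (· ≤ ·)]
    [Lattice T] [AddCommGroup T] [CovariantClass T T (· + ·) (· ≤ ·)]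
    (f : S → T)
    (hadd : ∀ x y : S, f (x + y) = f x + f y)
    (hsup : ∀ x y : S, f (x ⊔ y) = f x ⊔ f y)
    (hinf : ∀ x y : S, f (x ⊓ y) = f x ⊓ f y)
    (hsurj : Function.Surjective f)
    (s : S) (hs : IsSingular s) : IsSingular (f s) :=
  stmt2_general f hadd hsup hinf hsurj s hs
end

section
/- Let S be a Specker ℓ-group and m a maximal ℓ-ideal of S. Then there exists exactly one surjective ℓ-homomorphism ρ : S → ℤ whose kernel (the preimage of {0}) is m. -/
/-- An ℓ-ideal of an abelian ℓ-group is an additive subgroup that is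
order-convex with respect to absolute values. -/
def IsLIdeal {G : Type*} [Lattice G] [AddCommGroup G] (J : AddSubgroup G) : Prop :=
  ∀ a b : G, |a| ≤ |b| → b ∈ J → a ∈ J

/-- A maximal ℓ-ideal is a proper ℓ-ideal not strictly contained in any
proper ℓ-ideal. -/
def IsMaximalLIdeal {G : Type*} [Lattice G] [AddCommGroup G] (J : AddSubgroup G) : Prop :=
  IsLIdeal J ∧ J ≠ ⊤ ∧ ∀ K : AddSubgroup G, IsLIdeal K → K ≠ ⊤ → J ≤ K → J = K

section LatticeOrderedGroup

variable {S : Type*} [Lattice S] [AddCommGroup S] [AddLeftMono S] {a b c : S}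

theorem inf_add_le_inf_add_inf (ha : 0 ≤ a) (hb : 0 ≤ b) (hc : 0 ≤ c) :
    a ⊓ (b + c) ≤ a ⊓ b + a ⊓ c := by
  set d := a ⊓ (b + c)
  have hdb : (d - b)⁺ ≤ a ⊓ c := by
    refine sup_le (le_inf ?_ ?_) (le_inf ha hc)
    · exact (sub_le_self d hb).trans inf_le_left
    · exact sub_le_iff_le_add'.mpr inf_le_right
  calc d = d ⊓ b + (d - b)⁺ := by rw [inf_eq_sub_posPart_sub]; abel
    _ ≤ a ⊓ b + a ⊓ c := add_le_add (inf_le_inf_right b inf_le_left) hdb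

theorem inf_add_eq_zero (ha : 0 ≤ a) (hb : 0 ≤ b) (hc : 0 ≤ c) (hab : a ⊓ b = 0)
    (hac : a ⊓ c = 0) : a ⊓ (b + c) = 0 :=
  le_antisymm (by simpa [hab, hac] using inf_add_le_inf_add_inf ha hb hc)
    (le_inf ha (add_nonneg hb hc))

theorem inf_nsmul_eq_zero (ha : 0 ≤ a) (hb : 0 ≤ b) (hab : a ⊓ b = 0) (n : ℕ) :
    a ⊓ n • b = 0 := by
  induction n with
  | zero => simpa using ha
  | succ k ih => rw [succ_nsmul]; exact inf_add_eq_zero ha (nsmul_nonneg hb k) hb ih hab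

theorem le_of_inf_eq_zero_of_le_add (ha : 0 ≤ a) (hb : 0 ≤ b) (hc : 0 ≤ c) (hab : a ⊓ b = 0)
    (h : a ≤ b + c) : a ≤ c :=
  calc a = a ⊓ (b + c) := (inf_eq_left.mpr h).symm
    _ ≤ a ⊓ b + a ⊓ c := inf_add_le_inf_add_inf ha hb hc
    _ = a ⊓ c := by rw [hab, zero_add]
    _ ≤ c := inf_le_right

end LatticeOrderedGroup

section LIdeal

variable {S : Type*} [Lattice S] [AddCommGroup S] [AddLeftMono S]

/-- The ℓ-ideal generated by an ℓ-ideal `J` and an element `0 ≤ a`. -/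
def lIdealAdjoin (J : AddSubgroup S) (a : S) : AddSubgroup S where
  carrier := {x | ∃ n : ℕ, ∃ g ∈ J, 0 ≤ g ∧ |x| ≤ n • a + g}
  zero_mem' := ⟨0, 0, J.zero_mem, le_rfl, by simp⟩
  add_mem' := by
    rintro x y ⟨n, g, hg, hg0, hx⟩ ⟨k, h, hh, hh0, hy⟩
    refine ⟨n + k, g + h, J.add_mem hg hh, add_nonneg hg0 hh0, ?_⟩
    calc |x + y| ≤ |x| + |y| := abs_add_le x y
      _ ≤ n • a + g + (k • a + h) := add_le_add hx hy
      _ = (n + k) • a + (g + h) := by rw [add_nsmul]; abel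
  neg_mem' := by
    rintro x ⟨n, g, hg, hg0, hx⟩
    exact ⟨n, g, hg, hg0, by rwa [abs_neg]⟩

theorem isLIdeal_lIdealAdjoin (J : AddSubgroup S) (a : S) : IsLIdeal (lIdealAdjoin J a) := by
  rintro x y hxy ⟨n, g, hg, hg0, hy⟩
  exact ⟨n, g, hg, hg0, hxy.trans hy⟩

theorem le_lIdealAdjoin {J : AddSubgroup S} (hJ : IsLIdeal J) (a : S) : J ≤ lIdealAdjoin J a :=
  fun g hg => ⟨0, |g|, hJ _ _ (abs_abs g).le hg, abs_nonneg g, by simp⟩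

theorem mem_lIdealAdjoin_self (J : AddSubgroup S) {a : S} (ha : 0 ≤ a) : a ∈ lIdealAdjoin J a :=
  ⟨1, 0, J.zero_mem, le_rfl, by simp [abs_of_nonneg ha]⟩

theorem mem_of_mem_lIdealAdjoin {J : AddSubgroup S} (hJ : IsLIdeal J) {a b : S} (ha : 0 ≤ a)
    (hb : 0 ≤ b) (hab : b ⊓ a = 0) (hbJ : b ∈ lIdealAdjoin J a) : b ∈ J := by
  obtain ⟨n, g, hg, hg0, hbg⟩ := hbJ
  rw [abs_of_nonneg hb] at hbg
  have hle : b ≤ g :=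
    le_of_inf_eq_zero_of_le_add hb (nsmul_nonneg ha n) hg0 (inf_nsmul_eq_zero hb ha hab n) hbg
  exact hJ b g (by rwa [abs_of_nonneg hb, abs_of_nonneg hg0]) hg

theorem IsMaximalLIdeal.mem_or_mem {m : AddSubgroup S} (hm : IsMaximalLIdeal m) {a b : S}
    (ha : 0 ≤ a) (hb : 0 ≤ b) (hab : a ⊓ b = 0) : a ∈ m ∨ b ∈ m := by
  obtain ⟨hI, -, hmax⟩ := hm
  by_contra! ⟨ham, hbm⟩
  have hK : lIdealAdjoin m a = ⊤ := by
    by_contra hK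
    have := hmax _ (isLIdeal_lIdealAdjoin m a) hK (le_lIdealAdjoin hI a)
    exact ham (this ▸ mem_lIdealAdjoin_self m ha)
  have hbK : b ∈ lIdealAdjoin m a := hK ▸ AddSubgroup.mem_top b
  exact hbm (mem_of_mem_lIdealAdjoin hI ha hb (by rwa [inf_comm]) hbK)

theorem IsLIdeal.eq_zero_of_zsmul_mem {J : AddSubgroup S} (hJ : IsLIdeal J) {u : S} (hu : 0 ≤ u)
    (huJ : u ∉ J) {n : ℤ} (h : n • u ∈ J) : n = 0 := by
  by_contra hn
  have hnat : n.natAbs • u ∈ J := by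
    rcases Int.natAbs_eq n with hn' | hn' <;> rw [hn'] at h
    · rwa [natCast_zsmul] at h
    · rwa [neg_zsmul, natCast_zsmul, J.neg_mem_iff] at h
  have hle : u ≤ n.natAbs • u := le_self_nsmul hu (by omega)
  exact huJ (hJ u _ (by rwa [abs_of_nonneg hu, abs_of_nonneg (nsmul_nonneg hu _)]) hnat)

end LIdeal

section MapToLinearOrder

variable {S T : Type*} [Lattice S] [AddCommGroup S] [AddLeftMono S]
  [AddCommGroup T] [LinearOrder T] [IsOrderedAddMonoid T] (f : S →+ T)

theorem map_posPart_of_map_nonneg (hf : ∀ z, 0 ≤ z → 0 ≤ f z) (h : ∀ z, f z⁺ = 0 ∨ f z⁻ = 0)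
    (z : S) : f z⁺ = (f z)⁺ := by
  have hz : f z = f z⁺ - f z⁻ := by rw [← map_sub, posPart_sub_negPart]
  rcases h z with h0 | h0
  · rw [h0, eq_comm, posPart_eq_zero, hz, h0, zero_sub, neg_nonpos]
    exact hf _ (negPart_nonneg z)
  · rw [hz, h0, sub_zero, eq_comm, posPart_eq_self]
    exact hf _ (posPart_nonneg z)

theorem map_sup_of_map_posPart (h : ∀ z, f z⁺ = (f z)⁺) (x y : S) :
    f (x ⊔ y) = f x ⊔ f y := by
  rw [sup_eq_add_posPart_sub, map_add, h, map_sub, ← sup_eq_add_posPart_sub]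

theorem map_inf_of_map_sup (h : ∀ x y, f (x ⊔ y) = f x ⊔ f y) (x y : S) :
    f (x ⊓ y) = f x ⊓ f y := by
  have hxy := congrArg f (inf_add_sup x y)
  rw [map_add, map_add, h, ← inf_add_sup (f x) (f y)] at hxy
  exact add_right_cancel hxy

end MapToLinearOrder

theorem AddMonoidHom.eq_of_ker_le {S : Type*} [AddCommGroup S] (f g : S →+ ℤ)
    (hker : f.ker ≤ g.ker) {u : S} (hfu : f u = 1) (hgu : 0 ≤ g u)
    (hg : Function.Surjective g) : g = f := by
  have hgf : ∀ x, g x = f x * g u := by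
    intro x
    have hx : x - f x • u ∈ f.ker := by simp [hfu]
    have := hker hx
    rw [mem_ker, map_sub, map_zsmul, smul_eq_mul, sub_eq_zero] at this
    exact this
  obtain ⟨x, hx⟩ := hg 1
  have hgu1 : g u = 1 := by
    rcases Int.eq_one_or_neg_one_of_mul_eq_one' ((hgf x).symm.trans hx) with h | h <;> omega
  ext x
  rw [hgf, hgu1, mul_one]

theorem exists_isSingular_not_mem {S : Type*} [Lattice S] [AddCommGroup S] {m : AddSubgroup S}
    (hS : AddSubgroup.closure {s : S | IsSingular s} = ⊤) (hm : m ≠ ⊤) :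
    ∃ u, IsSingular u ∧ u ∉ m := by
  by_contra! h
  exact hm (top_le_iff.mp (hS ▸ (AddSubgroup.closure_le m).mpr h))

section Specker

variable {S : Type*} [Lattice S] [AddCommGroup S] [AddLeftMono S] {m : AddSubgroup S}

theorem IsSingular.mem_or_sub_mem (hm : IsMaximalLIdeal m) {s a : S} (hs : IsSingular s)
    (ha : 0 ≤ a) (has : a ≤ s) : a ∈ m ∨ s - a ∈ m :=
  hm.mem_or_mem ha (sub_nonneg.mpr has) (hs.2 a ha has)

theorem IsSingular.sub_mem (hm : IsMaximalLIdeal m) {s u : S} (hs : IsSingular s)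
    (hu : IsSingular u) (hsm : s ∉ m) (hum : u ∉ m) : s - u ∈ m := by
  set a := s ⊓ u
  have ha : 0 ≤ a := le_inf hs.1 hu.1
  have ham : a ∉ m := by
    intro ham
    have hd : (s - a) ⊓ (u - a) = 0 := by rw [← inf_sub, sub_self]
    rcases hm.mem_or_mem (sub_nonneg.mpr inf_le_left) (sub_nonneg.mpr inf_le_right) hd with h | h
    · exact hsm (sub_add_cancel s a ▸ m.add_mem h ham)
    · exact hum (sub_add_cancel u a ▸ m.add_mem h ham)
  have hsa := (hs.mem_or_sub_mem hm ha inf_le_left).resolve_left ham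
  have hua := (hu.mem_or_sub_mem hm ha inf_le_right).resolve_left ham
  simpa using m.sub_mem hsa hua

theorem sup_zmultiples_eq_top (hS : AddSubgroup.closure {s : S | IsSingular s} = ⊤)
    (hm : IsMaximalLIdeal m) {u : S} (hu : IsSingular u) (hum : u ∉ m) :
    m ⊔ AddSubgroup.zmultiples u = ⊤ := by
  rw [eq_top_iff, ← hS, AddSubgroup.closure_le]
  intro s hs
  by_cases hsm : s ∈ m
  · exact AddSubgroup.mem_sup_left hsm
  · simpa using AddSubgroup.add_mem_sup (hs.sub_mem hm hu hsm hum)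
      (AddSubgroup.mem_zmultiples u)

end Specker

section CoordinateMap

variable {S : Type*} [Lattice S] [AddCommGroup S] [AddLeftMono S] {J : AddSubgroup S} {u : S}

theorem exists_addMonoidHom_int_ker_eq (hJ : IsLIdeal J) (hu : 0 ≤ u) (huJ : u ∉ J)
    (htop : J ⊔ AddSubgroup.zmultiples u = ⊤) : ∃ ρ : S →+ ℤ, ρ u = 1 ∧ ρ.ker = J := by
  let φ : ℤ →+ S ⧸ J := zmultiplesHom _ (u : S ⧸ J)
  have hφ : Function.Bijective φ := by
    refine ⟨(injective_iff_map_eq_zero φ).mpr fun n hn => ?_, fun x => ?_⟩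
    · rw [zmultiplesHom_apply, ← QuotientAddGroup.mk_zsmul, QuotientAddGroup.eq_zero_iff] at hn
      exact hJ.eq_zero_of_zsmul_mem hu huJ hn
    · induction x using QuotientAddGroup.induction_on with | H x => ?_
      obtain ⟨y, hy, -, ⟨n, rfl⟩, rfl⟩ := AddSubgroup.mem_sup.mp (htop ▸ AddSubgroup.mem_top x)
      refine ⟨n, ?_⟩
      rw [zmultiplesHom_apply, ← QuotientAddGroup.mk_zsmul, QuotientAddGroup.mk_add,
        (QuotientAddGroup.eq_zero_iff y).mpr hy, zero_add]
  let e := AddEquiv.ofBijective φ hφ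
  refine ⟨e.symm.toAddMonoidHom.comp (QuotientAddGroup.mk' J), ?_, ?_⟩
  · exact e.symm_apply_eq.mpr (by simp [e, φ])
  · ext x
    simp

theorem map_nonneg_of_isLIdeal_ker (ρ : S →+ ℤ) (hker : IsLIdeal ρ.ker) (hu : 0 ≤ u)
    (hρu : ρ u = 1) {w : S} (hw : 0 ≤ w) : 0 ≤ ρ w := by
  by_contra! hneg
  have hv : w - ρ w • u ∈ ρ.ker := by simp [hρu]
  have huv : u ≤ w - ρ w • u :=
    calc u ≤ (-ρ w).toNat • u := le_self_nsmul hu (by omega)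
      _ = -ρ w • u := by rw [← natCast_zsmul, Int.toNat_of_nonneg (by omega)]
      _ ≤ w - ρ w • u := by rw [neg_zsmul, sub_eq_add_neg]; exact le_add_of_nonneg_left hw
  have hum : u ∈ ρ.ker :=
    hker u _ (by rwa [abs_of_nonneg hu, abs_of_nonneg (hu.trans huv)]) hv
  simp [hρu] at hum

end CoordinateMap

/-- For every maximal ℓ-ideal `m` of a Specker ℓ-group `S` there is exactly one
surjective ℓ-homomorphism `S → ℤ` with kernel `m`. -/
theorem stmt4 {S : Type*}
    [Lattice S] [AddCommGroup S] [CovariantClass S S (· + ·) (· ≤ ·)]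
    (hSpecker : AddSubgroup.closure {s : S | IsSingular s} = ⊤)
    (m : AddSubgroup S) (hm : IsMaximalLIdeal m) :
    ∃! ρ : S → ℤ, (∀ x y : S, ρ (x + y) = ρ x + ρ y) ∧
      (∀ x y : S, ρ (x ⊔ y) = ρ x ⊔ ρ y) ∧
      (∀ x y : S, ρ (x ⊓ y) = ρ x ⊓ ρ y) ∧
      Function.Surjective ρ ∧ ρ ⁻¹' {0} = (m : Set S) := by
  obtain ⟨u, hu, hum⟩ := exists_isSingular_not_mem hSpecker hm.2.1
  obtain ⟨ρ, hρu, hker⟩ := exists_addMonoidHom_int_ker_eq hm.1 hu.1 hum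
    (sup_zmultiples_eq_top hSpecker hm hu hum)
  have hmono : ∀ w, 0 ≤ w → 0 ≤ ρ w :=
    fun w => map_nonneg_of_isLIdeal_ker ρ (hker ▸ hm.1) hu.1 hρu
  have hprime : ∀ z, ρ z⁺ = 0 ∨ ρ z⁻ = 0 := by
    simpa only [← AddMonoidHom.mem_ker, hker] using fun z =>
      hm.mem_or_mem (posPart_nonneg z) (negPart_nonneg z) (posPart_inf_negPart_eq_zero z)
  have hsup := map_sup_of_map_posPart ρ (map_posPart_of_map_nonneg ρ hmono hprime)
  refine ⟨ρ, ⟨map_add ρ, hsup, map_inf_of_map_sup ρ hsup, fun n => ⟨n • u, by simp [hρu]⟩, ?_⟩, ?_⟩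
  · ext x
    simp [← hker]
  · rintro ρ' ⟨hadd, hsup', -, hsurj, hker'⟩
    let f := AddMonoidHom.mk' ρ' hadd
    have hker_le : ρ.ker ≤ f.ker := fun x hx =>
      show ρ' x = 0 from (Set.ext_iff.mp hker' x).mpr (hker ▸ hx)
    have hfu : 0 ≤ f u := by
      have := hsup' u 0
      rwa [sup_eq_left.mpr hu.1, show ρ' 0 = 0 from map_zero f, left_eq_sup] at this
    exact congrArg DFunLike.coe (ρ.eq_of_ker_le f hker_le hρu hfu hsurj)
end

section
/- Let S be a Specker ℓ-group possessing a greatest singular element s (i.e., s is singular and every singular element of S is ≤ s), and let ρ : S → ℤ be a surjective ℓ-homomorphism. Then ρ(s) = 1. -/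
/-! The image of a singular element under a surjective ℓ-homomorphism is singular, and the only
singular integers are `0` and `1`. If `ρ s` were `0`, every singular element `t ≤ s` would satisfy
`0 ≤ ρ t ≤ ρ s = 0`, so `ρ` would vanish on a generating set of `S`, contradicting surjectivity. -/

theorem monotone_of_map_inf {α β : Type*} [SemilatticeInf α] [SemilatticeInf β] {f : α → β}
    (hinf : ∀ x y, f (x ⊓ y) = f x ⊓ f y) : Monotone f :=
  fun x y hxy => by
    rw [← inf_eq_left.2 hxy, hinf]
    exact inf_le_right

theorem IsSingular.map_of_surjective {G H : Type*} [Lattice G] [AddCommGroup G] [Lattice H]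
    [AddCommGroup H] {s : G}
    (hs : IsSingular s) (f : G →+ H)
    (hsup : ∀ x y, f (x ⊔ y) = f x ⊔ f y) (hinf : ∀ x y, f (x ⊓ y) = f x ⊓ f y)
    (hf : Function.Surjective f) : IsSingular (f s) := by
  refine ⟨map_zero f ▸ monotone_of_map_inf hinf hs.1, fun a ha has => ?_⟩
  obtain ⟨b, rfl⟩ := hf a
  -- `c` is a lift of `f b` lying in the interval `[0, s]`, where singularity of `s` applies.
  set c := (b ⊔ 0) ⊓ s
  have hfc : f c = f b := by
    rw [hinf, hsup, map_zero, sup_eq_left.2 ha, inf_eq_left.2 has]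
  have hc : c ⊓ (s - c) = 0 := hs.2 c (le_inf le_sup_right hs.1) inf_le_right
  rw [← hfc, ← map_sub, ← hinf, hc, map_zero]

theorem Int.le_one_of_isSingular {n : ℤ} (hn : IsSingular n) : n ≤ 1 := by
  by_contra! h
  have := hn.2 1 zero_le_one h.le
  omega

theorem stmt5_general {S : Type*}
    [Lattice S] [AddCommGroup S]
    (hSpecker : AddSubgroup.closure {s : S | IsSingular s} = ⊤)
    (s : S) (hs : IsSingular s) (hgreatest : ∀ t : S, IsSingular t → t ≤ s)
    (ρ : S → ℤ)
    (hadd : ∀ x y : S, ρ (x + y) = ρ x + ρ y)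
    (hsup : ∀ x y : S, ρ (x ⊔ y) = ρ x ⊔ ρ y)
    (hinf : ∀ x y : S, ρ (x ⊓ y) = ρ x ⊓ ρ y)
    (hsurj : Function.Surjective ρ) : ρ s = 1 := by
  let f : S →+ ℤ := AddMonoidHom.mk' ρ hadd
  have hρs : IsSingular (ρ s) := hs.map_of_surjective f hsup hinf hsurj
  have hρs_ne : ρ s ≠ 0 := by
    intro h0
    have hf : f = 0 := AddMonoidHom.eq_of_eqOn_dense hSpecker fun t ht =>
      show f t = 0 from le_antisymm (h0 ▸ monotone_of_map_inf hinf (hgreatest t ht))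
        (map_zero f ▸ monotone_of_map_inf hinf ht.1)
    obtain ⟨x, hx⟩ := hsurj 1
    simpa [f, hx] using DFunLike.congr_fun hf x
  exact le_antisymm (Int.le_one_of_isSingular hρs) (hρs.1.lt_of_ne' hρs_ne)

/-- A surjective ℓ-homomorphism from a Specker ℓ-group possessing a greatest
singular element `s` to `ℤ` maps `s` to `1`. -/
theorem stmt5 {S : Type*}
    [Lattice S] [AddCommGroup S] [CovariantClass S S (· + ·) (· ≤ ·)]
    (hSpecker : AddSubgroup.closure {s : S | IsSingular s} = ⊤)
    (s : S) (hs : IsSingular s) (hgreatest : ∀ t : S, IsSingular t → t ≤ s)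
    (ρ : S → ℤ)
    (hadd : ∀ x y : S, ρ (x + y) = ρ x + ρ y)
    (hsup : ∀ x y : S, ρ (x ⊔ y) = ρ x ⊔ ρ y)
    (hinf : ∀ x y : S, ρ (x ⊓ y) = ρ x ⊓ ρ y)
    (hsurj : Function.Surjective ρ) : ρ s = 1 :=
  stmt5_general hSpecker s hs hgreatest ρ hadd hsup hinf hsurj
end

section
/- Let X be a boolean space. An element f of the abelian ℓ-group C(X, ℤ) is singular if and only if f takes only the values 0 and 1, i.e., f is the characteristic (indicator) function of a clopen subset of X. -/
theorem Int.isSingular_iff (n : ℤ) : IsSingular n ↔ n = 0 ∨ n = 1 := by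
  constructor
  · rintro ⟨hn, hs⟩
    have h := hs (1 ⊓ n) (by omega) inf_le_right
    omega
  · rintro (rfl | rfl) <;> exact ⟨by norm_num, fun a _ _ => by omega⟩

theorem ContinuousMap.isSingular_iff {X G : Type*} [TopologicalSpace X] [TopologicalSpace G]
    [Lattice G] [AddCommGroup G] [TopologicalLattice G] [IsTopologicalAddGroup G]
    (f : C(X, G)) : IsSingular f ↔ ∀ x, IsSingular (f x) := by
  constructor
  · rintro ⟨hf, hs⟩ x
    refine ⟨hf x, fun a ha₀ ha₁ => ?_⟩
    have h := congr($(hs (const X a ⊓ f) (le_inf (fun _ => ha₀) hf) inf_le_right) x)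
    simpa [inf_eq_left.mpr ha₁] using h
  · intro hs
    refine ⟨fun x => (hs x).1, fun a ha₀ ha₁ => ?_⟩
    ext x
    exact (hs x).2 (a x) (ha₀ x) (ha₁ x)

theorem stmt6_general {X : Type*} [TopologicalSpace X] (f : C(X, ℤ)) :
    IsSingular f ↔ ∀ x : X, f x = 0 ∨ f x = 1 := by
  simp only [ContinuousMap.isSingular_iff, Int.isSingular_iff]

/-- In `C(X, ℤ)` for a boolean space `X`, the singular elements are exactly the
functions taking only the values `0` and `1`, i.e. the characteristic functions
of clopen subsets of `X`. -/
theorem stmt6 {X : Type*} [TopologicalSpace X] [CompactSpace X] [T2Space X]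
    [TotallyDisconnectedSpace X] (f : C(X, ℤ)) :
    IsSingular f ↔ ∀ x : X, f x = 0 ∨ f x = 1 :=
  stmt6_general f
end

section
/- Let X be a compact topological space and let f, g ∈ C(X, ℤ) with f ≥ 0 and g ≥ 0. Then there exists n ∈ ℕ such that (n • f) ⊓ g = ((n+1) • f) ⊓ g (infima and scalar multiples taken pointwise). -/
/-!
On a compact space `g` is bounded above by some `N : ℕ`. At a point where `f x = 0` both sides
equal `0 ⊓ g x`; elsewhere `f x ≥ 1` by discreteness, so `N • f x ≥ N ≥ g x` and both sides
equal `g x`.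
-/

theorem Int.nsmul_inf_eq_succ_nsmul_inf {a b : ℤ} {n : ℕ} (ha : 0 ≤ a) (hb : b ≤ n) :
    n • a ⊓ b = (n + 1) • a ⊓ b := by
  rcases ha.eq_or_lt with rfl | ha
  · simp
  have hn : b ≤ n • a := hb.trans (by simpa using le_mul_of_one_le_right n.cast_nonneg ha)
  have hn' : b ≤ (n + 1) • a := hn.trans (nsmul_le_nsmul_left ha.le n.le_succ)
  rw [inf_eq_right.mpr hn, inf_eq_right.mpr hn']

theorem ContinuousMap.exists_nat_forall_le_of_compactSpace {X : Type*} [TopologicalSpace X]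
    [CompactSpace X] (g : C(X, ℤ)) : ∃ N : ℕ, ∀ x, g x ≤ N := by
  obtain ⟨M, hM⟩ := (isCompact_range g.continuous).bddAbove
  exact ⟨M.toNat, fun x => (hM ⟨x, rfl⟩).trans M.self_le_toNat⟩

theorem stmt8_general {X : Type*} [TopologicalSpace X] [CompactSpace X]
    (f g : C(X, ℤ)) (hf : 0 ≤ f) :
    ∃ n : ℕ, (n • f) ⊓ g = ((n + 1) • f) ⊓ g := by
  obtain ⟨N, hN⟩ := g.exists_nat_forall_le_of_compactSpace
  exact ⟨N, ContinuousMap.ext fun x => Int.nsmul_inf_eq_succ_nsmul_inf (hf x) (hN x)⟩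

/-- For a compact space `X` and `0 ≤ f, g` in `C(X, ℤ)`, there is `n : ℕ`
with `(n • f) ⊓ g = ((n+1) • f) ⊓ g`. -/
theorem stmt8 {X : Type*} [TopologicalSpace X] [CompactSpace X]
    (f g : C(X, ℤ)) (hf : 0 ≤ f) (hg : 0 ≤ g) :
    ∃ n : ℕ, (n • f) ⊓ g = ((n + 1) • f) ⊓ g :=
  stmt8_general f g hf
end

section
/- Let (S, u) be a unital Specker ℓ-group and let P be a proper ℓ-ideal of S that is prime, i.e., for all a, b ∈ S with a ≥ 0, b ≥ 0 and a ⊓ b = 0, either a ∈ P or b ∈ P. Then P is a maximal ℓ-ideal of S. (Every unital Specker ℓ-group is hyperarchimedean.) -/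
/-! If `b ≥ 0` lies outside a prime ℓ-ideal `P` of a Specker ℓ-group, then every `g` satisfies
`|g| ≤ n • b` modulo `P` for some `n`, so an ℓ-ideal containing `P` and `b` is everything.
For a singular `s`, the disjoint elements `s ⊓ b` and `s - s ⊓ b = (s - b)⁺` show that `s ≤ b`
modulo `P`; the bound then spreads from the singular generators to the whole group, as
`g ↦ (|g| - n • b)⁺` is subadditive in `(g, n)`. -/

section

variable {G : Type*} [Lattice G] [AddCommGroup G] [CovariantClass G G (· + ·) (· ≤ ·)]

namespace IsLIdeal

variable {J : AddSubgroup G}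

lemma mem_of_nonneg_of_le (hJ : IsLIdeal J) {a b : G} (ha : 0 ≤ a) (hab : a ≤ b) (hb : b ∈ J) :
    a ∈ J :=
  hJ a b (by rwa [abs_of_nonneg ha, abs_of_nonneg (ha.trans hab)]) hb

lemma abs_mem_iff (hJ : IsLIdeal J) {a : G} : |a| ∈ J ↔ a ∈ J :=
  ⟨hJ a |a| (abs_abs a).ge, hJ |a| a (abs_abs a).le⟩

lemma eq_top_of_posPart_abs_sub_nsmul_mem (hJ : IsLIdeal J) {b : G} (hb : b ∈ J)
    (h : ∀ g : G, ∃ n : ℕ, (|g| - n • b)⁺ ∈ J) : J = ⊤ := by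
  refine eq_top_iff.2 fun g _ => hJ.abs_mem_iff.1 ?_
  obtain ⟨n, hn⟩ := h g
  have hle : |g| ≤ (|g| - n • b)⁺ + n • b := by
    simpa using add_le_add_left (le_posPart (|g| - n • b)) (n • b)
  exact hJ.mem_of_nonneg_of_le (abs_nonneg g) hle (J.add_mem hn (J.nsmul_mem hb n))

end IsLIdeal

section Prime

variable {P : AddSubgroup G}

lemma posPart_sub_mem_of_isSingular
    (hprime : ∀ a b : G, 0 ≤ a → 0 ≤ b → a ⊓ b = 0 → a ∈ P ∨ b ∈ P)
    {b : G} (hb : 0 ≤ b) (hbP : b ∉ P) {s : G} (hs : IsSingular s) :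
    (s - b)⁺ ∈ P := by
  have hs_sub : s - s ⊓ b = (s - b)⁺ := by rw [inf_eq_sub_posPart_sub, sub_sub_cancel]
  have hb_sub : b - s ⊓ b = (b - s)⁺ := by rw [inf_comm, inf_eq_sub_posPart_sub, sub_sub_cancel]
  have hinf : 0 ≤ s ⊓ b := le_inf hs.1 hb
  have hdisj : s ⊓ b ⊓ (s - b)⁺ = 0 := hs_sub ▸ hs.2 _ hinf inf_le_left
  refine (hprime _ _ hinf (posPart_nonneg _) hdisj).elim (fun hinfP => ?_) id
  have hdisj' : (s - b)⁺ ⊓ (b - s)⁺ = 0 := by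
    simpa only [← posPart_neg, neg_sub] using posPart_inf_negPart_eq_zero (s - b)
  refine (hprime _ _ (posPart_nonneg _) (posPart_nonneg _) hdisj').resolve_right fun h => hbP ?_
  rw [← hb_sub] at h
  simpa only [add_sub_cancel] using P.add_mem hinfP h

lemma exists_posPart_abs_sub_nsmul_mem
    (hSpecker : AddSubgroup.closure {s : G | IsSingular s} = ⊤) (hP : IsLIdeal P)
    (hprime : ∀ a b : G, 0 ≤ a → 0 ≤ b → a ⊓ b = 0 → a ∈ P ∨ b ∈ P)
    {b : G} (hb : 0 ≤ b) (hbP : b ∉ P) (g : G) :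
    ∃ n : ℕ, (|g| - n • b)⁺ ∈ P := by
  induction hSpecker.ge (AddSubgroup.mem_top g) using AddSubgroup.closure_induction with
  | mem s hs =>
    exact ⟨1, by simpa [abs_of_nonneg hs.1] using posPart_sub_mem_of_isSingular hprime hb hbP hs⟩
  | zero => exact ⟨0, by simp⟩
  | neg x _ ih => simpa only [abs_neg] using ih
  | add x y _ _ ihx ihy =>
    obtain ⟨n, hn⟩ := ihx
    obtain ⟨m, hm⟩ := ihy
    refine ⟨n + m, hP.mem_of_nonneg_of_le (posPart_nonneg _) ?_ (P.add_mem hn hm)⟩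
    refine sup_le ?_ (add_nonneg (posPart_nonneg _) (posPart_nonneg _))
    calc |x + y| - (n + m) • b ≤ |x| + |y| - (n + m) • b := sub_le_sub_right (abs_add_le x y) _
      _ = (|x| - n • b) + (|y| - m • b) := by rw [add_smul]; abel
      _ ≤ (|x| - n • b)⁺ + (|y| - m • b)⁺ := add_le_add (le_posPart _) (le_posPart _)

end Prime

end

theorem stmt9_general {S : Type*}
    [Lattice S] [AddCommGroup S] [CovariantClass S S (· + ·) (· ≤ ·)]
    (hSpecker : AddSubgroup.closure {s : S | IsSingular s} = ⊤)
    (P : AddSubgroup S) (hP : IsLIdeal P) (hPproper : P ≠ ⊤)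
    (hprime : ∀ a b : S, 0 ≤ a → 0 ≤ b → a ⊓ b = 0 → a ∈ P ∨ b ∈ P) :
    IsMaximalLIdeal P := by
  refine ⟨hP, hPproper, fun K hK hKtop hPK => le_antisymm hPK fun x hxK => ?_⟩
  by_contra hxP
  have hbP : |x| ∉ P := hP.abs_mem_iff.not.2 hxP
  refine hKtop (hK.eq_top_of_posPart_abs_sub_nsmul_mem (hK.abs_mem_iff.2 hxK) fun g => ?_)
  obtain ⟨n, hn⟩ := exists_posPart_abs_sub_nsmul_mem hSpecker hP hprime (abs_nonneg x) hbP g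
  exact ⟨n, hPK hn⟩

/-- In a unital Specker ℓ-group every prime proper ℓ-ideal is maximal
(hyperarchimedean property). -/
theorem stmt9 {S : Type*}
    [Lattice S] [AddCommGroup S] [CovariantClass S S (· + ·) (· ≤ ·)]
    (hSpecker : AddSubgroup.closure {s : S | IsSingular s} = ⊤)
    (u : S) (hu0 : 0 ≤ u) (hu : ∀ g : S, ∃ n : ℕ, |g| ≤ n • u)
    (P : AddSubgroup S) (hP : IsLIdeal P) (hPproper : P ≠ ⊤)
    (hprime : ∀ a b : S, 0 ≤ a → 0 ≤ b → a ⊓ b = 0 → a ∈ P ∨ b ∈ P) :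
    IsMaximalLIdeal P :=
  stmt9_general hSpecker P hP hPproper hprime
end

section
/- Let (S, u) be a unital Specker ℓ-group and J a proper ℓ-ideal of S. Then J equals the intersection of all maximal ℓ-ideals of S containing J. -/
/-!
Fix `g ∉ J`. By Zorn's lemma there is an ℓ-ideal `M ⊇ J` maximal with `g ∉ M` (a value of `g`),
and such an `M` is prime: if `a ⊓ b = 0` with `a, b ∉ M`, then `g` lies in the ℓ-ideals generated
by `M, a` and by `M, b`, hence `|g| ≤ m + (n • a ⊓ n • b) = m` for some `0 ≤ m ∈ M`.
In a Specker group a proper prime ℓ-ideal `M` is maximal: for `k ∉ M` and a singular `s`,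
primality applied to the disjoint pairs `(s - a, |k| - a)` and `(a, s - a)`, where `a = s ⊓ |k|`,
puts `s` in the ℓ-ideal generated by `M` and `k`; so every ℓ-ideal strictly above `M` contains
all singular elements, which generate `S`.
-/

section LatticeOrderedGroup

variable {S : Type*} [Lattice S] [AddCommGroup S] [AddLeftMono S]

lemma inf_add_le_inf_add_inf_s10 {a x y : S} (ha : 0 ≤ a) (hx : 0 ≤ x) (hy : 0 ≤ y) :
    a ⊓ (x + y) ≤ a ⊓ x + a ⊓ y := by
  have : a ⊓ x + a ⊓ y = (a + a) ⊓ (a + y) ⊓ ((x + a) ⊓ (x + y)) := by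
    rw [← add_inf, ← add_inf, ← inf_add]
  rw [this]
  refine le_inf (le_inf ?_ ?_) (le_inf ?_ ?_)
  · exact inf_le_left.trans (le_add_of_nonneg_left ha)
  · exact inf_le_left.trans (le_add_of_nonneg_right hy)
  · exact inf_le_left.trans (le_add_of_nonneg_left hx)
  · exact inf_le_right

lemma inf_nsmul_right_eq_zero {a b : S} (h : a ⊓ b = 0) (n : ℕ) : a ⊓ n • b = 0 := by
  have ha : 0 ≤ a := h ▸ inf_le_left
  have hb : 0 ≤ b := h ▸ inf_le_right
  induction n with
  | zero => simpa using ha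
  | succ k ih =>
    refine le_antisymm ?_ (le_inf ha (nsmul_nonneg hb _))
    calc a ⊓ (k + 1) • b = a ⊓ (k • b + b) := by rw [succ_nsmul]
      _ ≤ a ⊓ k • b + a ⊓ b := inf_add_le_inf_add_inf_s10 ha (nsmul_nonneg hb k) hb
      _ = 0 := by rw [ih, h, add_zero]

lemma nsmul_inf_nsmul_eq_zero {a b : S} (h : a ⊓ b = 0) (n : ℕ) : n • a ⊓ n • b = 0 := by
  have := inf_nsmul_right_eq_zero (inf_comm a (n • b) ▸ inf_nsmul_right_eq_zero h n) n
  rwa [inf_comm] at this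

end LatticeOrderedGroup

section LIdeal

variable {S : Type*} [Lattice S] [AddCommGroup S]

lemma isLIdeal_sSup_of_isChain {c : Set (AddSubgroup S)} (hc : IsChain (· ≤ ·) c)
    (hne : c.Nonempty) (hcI : ∀ K ∈ c, IsLIdeal K) : IsLIdeal (sSup c) := by
  intro a b hab hb
  obtain ⟨K, hK, hbK⟩ := (AddSubgroup.mem_sSup_of_directedOn hne hc.directedOn).mp hb
  exact le_sSup hK (hcI K hK a b hab hbK)

def IsPrimeLIdeal (M : AddSubgroup S) : Prop :=
  IsLIdeal M ∧ ∀ a b : S, a ⊓ b = 0 → a ∈ M ∨ b ∈ M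

lemma exists_isLIdeal_maximal_notMem {J : AddSubgroup S} (hJ : IsLIdeal J) {g : S}
    (hg : g ∉ J) :
    ∃ M, IsLIdeal M ∧ J ≤ M ∧ g ∉ M ∧ ∀ K, IsLIdeal K → M < K → g ∈ K := by
  let s : Set (AddSubgroup S) := {K | IsLIdeal K ∧ g ∉ K}
  have hchain : ∀ c ⊆ s, IsChain (· ≤ ·) c → ∀ y ∈ c, ∃ ub ∈ s, ∀ z ∈ c, z ≤ ub := by
    intro c hcs hc y hy
    have hne : c.Nonempty := ⟨y, hy⟩
    refine ⟨sSup c, ⟨isLIdeal_sSup_of_isChain hc hne fun K hK => (hcs hK).1, ?_⟩,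
      fun z => le_sSup⟩
    rw [AddSubgroup.mem_sSup_of_directedOn hne hc.directedOn]
    rintro ⟨K, hK, hgK⟩
    exact (hcs hK).2 hgK
  obtain ⟨M, hJM, ⟨hM, hgM⟩, hmax⟩ := zorn_le_nonempty₀ s hchain J ⟨hJ, hg⟩
  exact ⟨M, hM, hJM, hgM, fun K hK hMK => by_contra fun hgK => hMK.not_ge (hmax ⟨hK, hgK⟩ hMK.le)⟩

variable [AddLeftMono S]

lemma IsLIdeal.abs_mem_iff_s10 {M : AddSubgroup S} (hM : IsLIdeal M) {g : S} : |g| ∈ M ↔ g ∈ M :=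
  ⟨hM g |g| (abs_abs g).ge, hM |g| g (abs_abs g).le⟩

lemma IsLIdeal.mem_of_abs_le {M : AddSubgroup S} (hM : IsLIdeal M) {x m : S} (hm0 : 0 ≤ m)
    (hx : |x| ≤ m) (hm : m ∈ M) : x ∈ M :=
  hM x m (by rwa [abs_of_nonneg hm0]) hm

/-- The ℓ-ideal generated by `M` and `g`, when `M` is an ℓ-ideal. -/
def lidealAdjoin (M : AddSubgroup S) (g : S) : AddSubgroup S where
  carrier := {x | ∃ m ∈ M, 0 ≤ m ∧ ∃ n : ℕ, |x| ≤ m + n • |g|}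
  zero_mem' := ⟨0, M.zero_mem, le_rfl, 0, by simp⟩
  add_mem' := by
    rintro x y ⟨m₁, hm₁, hm₁0, n₁, h₁⟩ ⟨m₂, hm₂, hm₂0, n₂, h₂⟩
    refine ⟨m₁ + m₂, M.add_mem hm₁ hm₂, add_nonneg hm₁0 hm₂0, n₁ + n₂, ?_⟩
    calc |x + y| ≤ |x| + |y| := abs_add_le x y
      _ ≤ (m₁ + n₁ • |g|) + (m₂ + n₂ • |g|) := add_le_add h₁ h₂
      _ = (m₁ + m₂) + (n₁ + n₂) • |g| := by rw [add_nsmul]; abel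
  neg_mem' := by
    rintro x ⟨m, hm, hm0, n, h⟩
    exact ⟨m, hm, hm0, n, by rwa [abs_neg]⟩

lemma isLIdeal_lidealAdjoin (M : AddSubgroup S) (g : S) : IsLIdeal (lidealAdjoin M g) := by
  rintro a b hab ⟨m, hm, hm0, n, h⟩
  exact ⟨m, hm, hm0, n, hab.trans h⟩

lemma le_lidealAdjoin {M : AddSubgroup S} (hM : IsLIdeal M) (g : S) : M ≤ lidealAdjoin M g :=
  fun x hx => ⟨|x|, hM.abs_mem_iff_s10.mpr hx, abs_nonneg x, 0, by simp⟩

lemma mem_lidealAdjoin_self (M : AddSubgroup S) (g : S) : g ∈ lidealAdjoin M g :=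
  ⟨0, M.zero_mem, le_rfl, 1, by simp⟩

lemma lidealAdjoin_le {M K : AddSubgroup S} (hK : IsLIdeal K) (hMK : M ≤ K) {g : S}
    (hg : g ∈ K) : lidealAdjoin M g ≤ K := by
  rintro x ⟨m, hm, hm0, n, h⟩
  exact hK.mem_of_abs_le (add_nonneg hm0 (nsmul_nonneg (abs_nonneg g) n)) h
    (K.add_mem (hMK hm) (K.nsmul_mem (hK.abs_mem_iff_s10.mpr hg) n))

lemma lt_lidealAdjoin {M : AddSubgroup S} (hM : IsLIdeal M) {g : S} (hg : g ∉ M) :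
    M < lidealAdjoin M g :=
  lt_of_le_of_ne (le_lidealAdjoin hM g) fun h => hg (h ▸ mem_lidealAdjoin_self M g)

lemma isPrimeLIdeal_of_maximal_notMem {M : AddSubgroup S} (hM : IsLIdeal M) {g : S}
    (hgM : g ∉ M) (hmax : ∀ K, IsLIdeal K → M < K → g ∈ K) : IsPrimeLIdeal M := by
  refine ⟨hM, fun a b hab => by_contra fun hnot => hgM ?_⟩
  rw [not_or] at hnot
  have ha : 0 ≤ a := hab ▸ inf_le_left
  have hb : 0 ≤ b := hab ▸ inf_le_right
  obtain ⟨m₁, hm₁, hm₁0, n₁, h₁⟩ :=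
    hmax _ (isLIdeal_lidealAdjoin M a) (lt_lidealAdjoin hM hnot.1)
  obtain ⟨m₂, hm₂, hm₂0, n₂, h₂⟩ :=
    hmax _ (isLIdeal_lidealAdjoin M b) (lt_lidealAdjoin hM hnot.2)
  rw [abs_of_nonneg ha] at h₁
  rw [abs_of_nonneg hb] at h₂
  have hle : |g| ≤ m₁ + m₂ + (max n₁ n₂ • a ⊓ max n₁ n₂ • b) := by
    rw [add_inf]
    refine le_inf (h₁.trans (add_le_add (le_add_of_nonneg_right hm₂0) ?_))
      (h₂.trans (add_le_add (le_add_of_nonneg_left hm₁0) ?_))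
    · exact nsmul_le_nsmul_left ha (le_max_left n₁ n₂)
    · exact nsmul_le_nsmul_left hb (le_max_right n₁ n₂)
  rw [nsmul_inf_nsmul_eq_zero hab, add_zero] at hle
  exact hM.mem_of_abs_le (add_nonneg hm₁0 hm₂0) hle (M.add_mem hm₁ hm₂)

lemma IsPrimeLIdeal.isSingular_mem_lidealAdjoin {M : AddSubgroup S} (hM : IsPrimeLIdeal M)
    {k : S} (hk : k ∉ M) {s : S} (hs : IsSingular s) : s ∈ lidealAdjoin M k := by
  set a := s ⊓ |k|
  have hsa : a ≤ s := inf_le_left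
  have hka : a ≤ |k| := inf_le_right
  have of_sub_mem : s - a ∈ M → s ∈ lidealAdjoin M k := fun hmem =>
    ⟨s - a, hmem, sub_nonneg.mpr hsa, 1, by
      rw [abs_of_nonneg hs.1, one_nsmul]
      calc s = (s - a) + a := (sub_add_cancel s a).symm
        _ ≤ (s - a) + |k| := add_le_add_right hka _⟩
  have hdisj : (s - a) ⊓ (|k| - a) = 0 := by rw [← inf_sub, sub_self]
  rcases hM.2 _ _ hdisj with h | h
  · exact of_sub_mem h
  have ha : a ∉ M := fun ha => hk (hM.1.abs_mem_iff_s10.mp (sub_add_cancel |k| a ▸ M.add_mem h ha))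
  exact (hM.2 _ _ (hs.2 a (le_inf hs.1 (abs_nonneg k)) hsa)).elim (absurd · ha) of_sub_mem

lemma IsPrimeLIdeal.isMaximalLIdeal (hSpecker : AddSubgroup.closure {s : S | IsSingular s} = ⊤)
    {M : AddSubgroup S} (hM : IsPrimeLIdeal M) (hMtop : M ≠ ⊤) : IsMaximalLIdeal M := by
  refine ⟨hM.1, hMtop, fun K hK hKtop hMK => by_contra fun hne => hKtop ?_⟩
  obtain ⟨k, hkK, hkM⟩ := SetLike.exists_of_lt (lt_of_le_of_ne hMK hne)
  rw [eq_top_iff, ← hSpecker, AddSubgroup.closure_le]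
  exact fun s hs => lidealAdjoin_le hK hMK hkK (hM.isSingular_mem_lidealAdjoin hkM hs)

end LIdeal

theorem stmt10_general {S : Type*}
    [Lattice S] [AddCommGroup S] [CovariantClass S S (· + ·) (· ≤ ·)]
    (hSpecker : AddSubgroup.closure {s : S | IsSingular s} = ⊤)
    (J : AddSubgroup S) (hJ : IsLIdeal J) :
    (J : Set S) =
      ⋂ m ∈ {m : AddSubgroup S | IsMaximalLIdeal m ∧ J ≤ m}, (m : Set S) := by
  refine subset_antisymm (Set.subset_iInter₂ fun m hm => hm.2) fun g hg => by_contra fun hgJ => ?_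
  obtain ⟨M, hM, hJM, hgM, hmax⟩ := exists_isLIdeal_maximal_notMem hJ hgJ
  have hMtop : M ≠ ⊤ := fun h => hgM (h ▸ AddSubgroup.mem_top g)
  have hMmax := (isPrimeLIdeal_of_maximal_notMem hM hgM hmax).isMaximalLIdeal hSpecker hMtop
  exact hgM (Set.mem_iInter₂.mp hg M ⟨hMmax, hJM⟩)

/-- In a unital Specker ℓ-group, every proper ℓ-ideal is the intersection of
the maximal ℓ-ideals containing it. -/
theorem stmt10 {S : Type*}
    [Lattice S] [AddCommGroup S] [CovariantClass S S (· + ·) (· ≤ ·)]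
    (hSpecker : AddSubgroup.closure {s : S | IsSingular s} = ⊤)
    (u : S) (hu0 : 0 ≤ u) (hu : ∀ g : S, ∃ n : ℕ, |g| ≤ n • u)
    (J : AddSubgroup S) (hJ : IsLIdeal J) (hJproper : J ≠ ⊤) :
    (J : Set S) =
      ⋂ m ∈ {m : AddSubgroup S | IsMaximalLIdeal m ∧ J ≤ m}, (m : Set S) :=
  stmt10_general hSpecker J hJ
end

section
/- Let X be a boolean space. For each x ∈ X, the set m_x = {f ∈ C(X, ℤ) | f(x) = 0} is a maximal ℓ-ideal of C(X, ℤ), and the map x ↦ m_x is a homeomorphism from X onto Maxspec(C(X, ℤ)) equipped with the maximal spectral topology. -/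
/-- The maximal spectrum of an abelian ℓ-group: the set of maximal ℓ-ideals. -/
def MaxSpec (G : Type*) [Lattice G] [AddCommGroup G] : Type _ :=
  {m : AddSubgroup G // IsMaximalLIdeal m}

/-- The maximal spectral topology, with subbasis of open sets
`{m | g ∉ m}` for `g ∈ G`. -/
instance (G : Type*) [Lattice G] [AddCommGroup G] : TopologicalSpace (MaxSpec G) :=
  TopologicalSpace.generateFrom
    {U : Set (MaxSpec G) | ∃ g : G, U = {m : MaxSpec G | g ∉ m.1}}

/-- The ℓ-ideal of continuous functions vanishing at `x`. -/
def evalIdeal {X : Type*} [TopologicalSpace X] (x : X) : AddSubgroup C(X, ℤ) where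
  carrier := {f : C(X, ℤ) | f x = 0}
  add_mem' := fun {a b} ha hb => by
    simp only [Set.mem_setOf_eq, ContinuousMap.add_apply] at *
    omega
  zero_mem' := by simp
  neg_mem' := fun {a} ha => by
    simp only [Set.mem_setOf_eq, ContinuousMap.neg_apply] at *
    omega

/-!
A proper ℓ-ideal `J` of `C(X, ℤ)` has a common zero: otherwise compactness gives finitely many
`f ∈ J` without a common zero, and `∑ |f|` is then a nowhere-vanishing element of `J`, hence a
strong unit, which forces `J = ⊤`. So every maximal ℓ-ideal is some `m_x`, and `m_x` is maximal
because `C(X, ℤ) = m_x + ℤ`. The map `x ↦ m_x` pulls the subbasic open set `{m | g ∉ m}` back to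
the support of `g`; these supports are open, and include all clopen sets (as supports of
indicators), which form a basis of a boolean space.
-/

open Topology TopologicalSpace

section LIdeal

variable {G : Type*} [Lattice G] [AddCommGroup G] {J : AddSubgroup G}

theorem IsLIdeal.abs_mem [AddLeftMono G] (hJ : IsLIdeal J) {b : G} (hb : b ∈ J) : |b| ∈ J :=
  hJ _ _ (abs_abs b).le hb

theorem IsLIdeal.eq_top_of_mem (hJ : IsLIdeal J) {u : G} (hu : u ∈ J)
    (hunit : ∀ g : G, ∃ n : ℤ, |g| ≤ |n • u|) : J = ⊤ := by
  refine (AddSubgroup.eq_top_iff' J).mpr fun g => ?_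
  obtain ⟨n, hn⟩ := hunit g
  exact hJ g _ hn (J.zsmul_mem hu n)

end LIdeal

section ContinuousIntFunctions

variable {X : Type*} [TopologicalSpace X]

theorem ContinuousMap.exists_abs_le_zsmul_abs [CompactSpace X] {u : C(X, ℤ)}
    (hu : ∀ x, u x ≠ 0) (g : C(X, ℤ)) : ∃ n : ℤ, |g| ≤ |n • u| := by
  obtain ⟨N, hN⟩ := (isCompact_range (|g|).continuous).bddAbove
  refine ⟨N, fun x => ?_⟩
  have hgx : |g x| ≤ N := hN ⟨x, (ContinuousMap.abs_apply g x).symm⟩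
  calc |g x| ≤ |N| := hgx.trans (le_abs_self N)
    _ ≤ |N| * |u x| := le_mul_of_one_le_right (abs_nonneg N) (Int.one_le_abs (hu x))
    _ = |(N • u) x| := by simp [abs_mul]

theorem IsLIdeal.eq_top_of_mem_of_forall_ne_zero [CompactSpace X] {J : AddSubgroup C(X, ℤ)}
    (hJ : IsLIdeal J) {u : C(X, ℤ)} (hu : u ∈ J) (hu0 : ∀ x, u x ≠ 0) : J = ⊤ :=
  hJ.eq_top_of_mem hu (ContinuousMap.exists_abs_le_zsmul_abs hu0)

theorem mem_evalIdeal {x : X} {f : C(X, ℤ)} : f ∈ evalIdeal x ↔ f x = 0 := Iff.rfl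

theorem isLIdeal_evalIdeal (x : X) : IsLIdeal (evalIdeal x) := by
  intro a b hab hb
  have hx : |a x| ≤ |b x| := hab x
  rw [mem_evalIdeal.mp hb, abs_zero] at hx
  exact abs_nonpos_iff.mp hx

theorem evalIdeal_ne_top (x : X) : evalIdeal x ≠ ⊤ := fun h => by
  simpa [mem_evalIdeal] using h.ge (AddSubgroup.mem_top (1 : C(X, ℤ)))

theorem isMaximalLIdeal_evalIdeal [CompactSpace X] (x : X) : IsMaximalLIdeal (evalIdeal x) := by
  refine ⟨isLIdeal_evalIdeal x, evalIdeal_ne_top x, fun K hK hKtop hle => le_antisymm hle ?_⟩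
  intro f hf
  by_contra hfx
  have hconst : ContinuousMap.const X (f x) ∈ K := by
    simpa using K.sub_mem hf (hle (show f - .const X (f x) ∈ evalIdeal x by simp [mem_evalIdeal]))
  exact hKtop (hK.eq_top_of_mem_of_forall_ne_zero hconst fun _ => hfx)

theorem IsLIdeal.exists_le_evalIdeal [CompactSpace X] {J : AddSubgroup C(X, ℤ)}
    (hJ : IsLIdeal J) (hJtop : J ≠ ⊤) : ∃ x, J ≤ evalIdeal x := by
  by_contra! h
  choose f hfJ hfx using fun x => SetLike.not_le_iff_exists.mp (h x)
  obtain ⟨t, ht⟩ := CompactSpace.elim_nhds_subcover (fun x => Function.support (f x))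
    fun x => ((isOpen_discrete {0}ᶜ).preimage (f x).continuous).mem_nhds (hfx x)
  refine hJtop (hJ.eq_top_of_mem_of_forall_ne_zero (u := ∑ x ∈ t, |f x|)
    (J.sum_mem fun x _ => hJ.abs_mem (hfJ x)) fun y => ?_)
  obtain ⟨x, hxt, hxy⟩ := Set.mem_iUnion₂.mp (ht.ge (Set.mem_univ y))
  have hpos : 0 < ∑ z ∈ t, |f z y| :=
    Finset.sum_pos' (fun z _ => abs_nonneg (f z y)) ⟨x, hxt, abs_pos.mpr hxy⟩
  simpa using hpos.ne'

theorem IsMaximalLIdeal.exists_eq_evalIdeal [CompactSpace X] {m : AddSubgroup C(X, ℤ)}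
    (hm : IsMaximalLIdeal m) : ∃ x, m = evalIdeal x := by
  obtain ⟨x, hx⟩ := hm.1.exists_le_evalIdeal hm.2.1
  exact ⟨x, hm.2.2 _ (isLIdeal_evalIdeal x) (evalIdeal_ne_top x) hx⟩

end ContinuousIntFunctions

section EvalMaxSpec

variable {X : Type*} [TopologicalSpace X] [CompactSpace X]

variable (X) in
def evalMaxSpec (x : X) : MaxSpec C(X, ℤ) := ⟨evalIdeal x, isMaximalLIdeal_evalIdeal x⟩

theorem evalMaxSpec_surjective : Function.Surjective (evalMaxSpec X) := fun m => by
  obtain ⟨x, hx⟩ := m.2.exists_eq_evalIdeal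
  exact ⟨x, Subtype.ext hx.symm⟩

theorem preimage_evalMaxSpec_setOf_notMem (g : C(X, ℤ)) :
    evalMaxSpec X ⁻¹' {m | g ∉ m.1} = Function.support g := rfl

theorem isInducing_evalMaxSpec (hX : IsTopologicalBasis {s : Set X | IsClopen s}) :
    IsInducing (evalMaxSpec X) := by
  refine ⟨le_antisymm ?_ ?_⟩
  · refine continuous_iff_le_induced.mp (continuous_generateFrom_iff.mpr ?_)
    rintro _ ⟨g, rfl⟩
    rw [preimage_evalMaxSpec_setOf_notMem]
    exact (isOpen_discrete {0}ᶜ).preimage g.continuous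
  · refine (le_generateFrom fun U (hU : IsClopen U) => ?_).trans hX.eq_generateFrom.ge
    let χ : C(X, ℤ) := LocallyConstant.charFn ℤ hU
    refine isOpen_induced_iff.mpr ⟨{m | χ ∉ m.1}, isOpen_generateFrom_of_mem ⟨χ, rfl⟩, ?_⟩
    rw [preimage_evalMaxSpec_setOf_notMem]
    ext x
    simp [χ, LocallyConstant.charFn_eq_zero]

end EvalMaxSpec

/-- For a boolean space `X`, each `evalIdeal x` is a maximal ℓ-ideal of
`C(X, ℤ)`, and `x ↦ evalIdeal x` is a homeomorphism from `X` onto the maximal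
spectrum of `C(X, ℤ)` with the maximal spectral topology. -/
theorem stmt13 {X : Type*} [TopologicalSpace X] [CompactSpace X] [T2Space X]
    [TotallyDisconnectedSpace X] :
    (∀ x : X, IsMaximalLIdeal (evalIdeal x)) ∧
    ∃ e : X ≃ₜ MaxSpec C(X, ℤ), ∀ x : X, (e x).1 = evalIdeal x :=
  ⟨isMaximalLIdeal_evalIdeal,
    (isInducing_evalMaxSpec isTopologicalBasis_isClopen).isEmbedding.toHomeomorphOfSurjective
      evalMaxSpec_surjective, fun _ => rfl⟩
end

section
/- Let ψ : (S, u) → (T, v) be a unital ℓ-homomorphism between unital Specker ℓ-groups, and let ρ : T → ℤ and σ : S → ℤ be surjective ℓ-homomorphisms such that the kernel of σ equals the preimage under ψ of the kernel of ρ. Then there exists an integer k ≥ 1 such that ρ(ψ(g)) = k · σ(g) for all g ∈ S; in particular, ρ(v) = k · σ(u). -/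
/-!
Pick `x` with `σ x = 1`; replacing it by `x ⊔ 0` we may take `x ≥ 0`. For every `g`, the element
`g - σ g • x` lies in `ker σ = ψ⁻¹(ker ρ)`, so `ρ ∘ ψ = k • σ` with `k = ρ (ψ x)`. Since `ψ` and `ρ`
preserve `⊔` they are monotone, so `k ≥ 0`; and `k ≠ 0` because `x ∉ ker σ`.
-/

theorem AddMonoidHom.eq_mul_of_ker_le {A : Type*} [AddCommGroup A] (f g : A →+ ℤ) {x : A}
    (hx : f x = 1) (hker : ∀ a, f a = 0 → g a = 0) (a : A) : g a = g x * f a := by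
  have hzero : g (a - f a • x) = 0 := hker _ (by simp [hx])
  rw [map_sub, map_zsmul, smul_eq_mul] at hzero
  linarith

theorem exists_nonneg_map_eq_one {S : Type*} [Lattice S] [AddCommGroup S] (σ : S → ℤ)
    (hσadd : ∀ x y : S, σ (x + y) = σ x + σ y) (hσsup : ∀ x y : S, σ (x ⊔ y) = σ x ⊔ σ y)
    (hσsurj : Function.Surjective σ) : ∃ x : S, 0 ≤ x ∧ σ x = 1 := by
  obtain ⟨x, hx⟩ := hσsurj 1
  have hσzero : σ 0 = 0 := map_zero (AddMonoidHom.mk' σ hσadd)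
  exact ⟨x ⊔ 0, le_sup_right, by rw [hσsup, hx, hσzero]; rfl⟩

theorem stmt14_general {S T : Type*}
    [Lattice S] [AddCommGroup S]
    [Lattice T] [AddCommGroup T]
    (u : S)
    (v : T)
    (ψ : S → T)
    (hψadd : ∀ x y : S, ψ (x + y) = ψ x + ψ y)
    (hψsup : ∀ x y : S, ψ (x ⊔ y) = ψ x ⊔ ψ y)
    (hψu : ψ u = v)
    (ρ : T → ℤ)
    (hρadd : ∀ x y : T, ρ (x + y) = ρ x + ρ y)
    (hρsup : ∀ x y : T, ρ (x ⊔ y) = ρ x ⊔ ρ y)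
    (σ : S → ℤ)
    (hσadd : ∀ x y : S, σ (x + y) = σ x + σ y)
    (hσsup : ∀ x y : S, σ (x ⊔ y) = σ x ⊔ σ y)
    (hσsurj : Function.Surjective σ)
    (hker : σ ⁻¹' {0} = ψ ⁻¹' (ρ ⁻¹' {0})) :
    ∃ k : ℤ, 1 ≤ k ∧ (∀ g : S, ρ (ψ g) = k * σ g) ∧ ρ v = k * σ u := by
  obtain ⟨x, hx0, hx⟩ := exists_nonneg_map_eq_one σ hσadd hσsup hσsurj
  let ρψ : S →+ ℤ := AddMonoidHom.mk' (fun g => ρ (ψ g)) fun a b => by rw [hψadd, hρadd]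
  have hmul : ∀ g : S, ρ (ψ g) = ρ (ψ x) * σ g :=
    AddMonoidHom.eq_mul_of_ker_le (AddMonoidHom.mk' σ hσadd) ρψ hx
      fun a ha => (Set.ext_iff.mp hker a).mp ha
  have hk_nonneg : 0 ≤ ρ (ψ x) := by
    have hmono : Monotone (ρ ∘ ψ) :=
      (Monotone.of_map_sup hρsup).comp (Monotone.of_map_sup hψsup)
    simpa [show ρ (ψ 0) = 0 from map_zero ρψ] using hmono hx0
  have hk_ne_zero : ρ (ψ x) ≠ 0 := fun hk => by
    have hσx : σ x = 0 := (Set.ext_iff.mp hker x).mpr hk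
    omega
  refine ⟨ρ (ψ x), by omega, hmul, hψu ▸ hmul u⟩

/-- Given a unital ℓ-homomorphism `ψ` between unital Specker ℓ-groups and
surjective ℓ-homomorphisms `ρ : T → ℤ`, `σ : S → ℤ` with `ker σ = ψ⁻¹(ker ρ)`,
there is `k ≥ 1` with `ρ ∘ ψ = k · σ`; in particular `ρ v = k · σ u`. -/
theorem stmt14 {S T : Type*}
    [Lattice S] [AddCommGroup S] [CovariantClass S S (· + ·) (· ≤ ·)]
    [Lattice T] [AddCommGroup T] [CovariantClass T T (· + ·) (· ≤ ·)]
    (hSpeckerS : AddSubgroup.closure {s : S | IsSingular s} = ⊤)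
    (hSpeckerT : AddSubgroup.closure {t : T | IsSingular t} = ⊤)
    (u : S) (hu0 : 0 ≤ u) (hu : ∀ g : S, ∃ n : ℕ, |g| ≤ n • u)
    (v : T) (hv0 : 0 ≤ v) (hv : ∀ h : T, ∃ n : ℕ, |h| ≤ n • v)
    (ψ : S → T)
    (hψadd : ∀ x y : S, ψ (x + y) = ψ x + ψ y)
    (hψsup : ∀ x y : S, ψ (x ⊔ y) = ψ x ⊔ ψ y)
    (hψinf : ∀ x y : S, ψ (x ⊓ y) = ψ x ⊓ ψ y)
    (hψu : ψ u = v)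
    (ρ : T → ℤ)
    (hρadd : ∀ x y : T, ρ (x + y) = ρ x + ρ y)
    (hρsup : ∀ x y : T, ρ (x ⊔ y) = ρ x ⊔ ρ y)
    (hρinf : ∀ x y : T, ρ (x ⊓ y) = ρ x ⊓ ρ y)
    (hρsurj : Function.Surjective ρ)
    (σ : S → ℤ)
    (hσadd : ∀ x y : S, σ (x + y) = σ x + σ y)
    (hσsup : ∀ x y : S, σ (x ⊔ y) = σ x ⊔ σ y)
    (hσinf : ∀ x y : S, σ (x ⊓ y) = σ x ⊓ σ y)
    (hσsurj : Function.Surjective σ)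
    (hker : σ ⁻¹' {0} = ψ ⁻¹' (ρ ⁻¹' {0})) :
    ∃ k : ℤ, 1 ≤ k ∧ (∀ g : S, ρ (ψ g) = k * σ g) ∧ ρ v = k * σ u :=
  stmt14_general u v ψ hψadd hψsup hψu ρ hρadd hρsup σ hσadd hσsup hσsurj hker
end

section
/- Let W and V be boolean spaces, let u_W ∈ C(W, ℤ) and u_V ∈ C(V, ℤ) satisfy u_W(x) ≥ 1 for all x ∈ W and u_V(y) ≥ 1 for all y ∈ V, and let ψ : C(V, ℤ) → C(W, ℤ) be an ℓ-homomorphism with ψ(u_V) = u_W. Then there exists a unique continuous map γ : W → V such that for all x ∈ W the integer u_V(γ(x)) divides u_W(x), and for all f ∈ C(V, ℤ) and all x ∈ W one has ψ(f)(x) · u_V(γ(x)) = f(γ(x)) · u_W(x). -/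
/-!
Fix `x ∈ W` and read `φ f = ψ f x` as an ℓ-homomorphism `C(V, ℤ) → ℤ`. For a clopen `U ⊆ V`
let `u_U` be `u_V` cut off outside `U`. From `u_U + u_Uᶜ = u_V` and `u_U ⊓ u_Uᶜ = 0` one gets
`φ u_U ∈ {0, u_W x}`, and the clopens with `φ u_U = u_W x` are closed under intersection and
nonempty, so by compactness of `V` they have a common point `γ x`, which lies in a clopen `U` iff
`φ u_U = u_W x`. Then `φ f` only depends on `f` near `γ x`, where `f` and `u_V` are both constant,
and that gives `ψ f x * u_V (γ x) = f (γ x) * u_W x`. Continuity of `γ` holds because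
`γ⁻¹ U = {x | ψ u_U x = u_W x}`; uniqueness because the identity applied to `u_U` recovers which
clopens contain `γ x`.
-/

open TopologicalSpace Set

namespace TopologicalSpace.Clopens

variable {V : Type*} [TopologicalSpace V]

noncomputable def indicator (U : Clopens V) (f : C(V, ℤ)) : C(V, ℤ) :=
  ⟨(U : Set V).indicator f, U.isClopen.continuous_indicator f.continuous⟩

@[simp]
lemma indicator_apply (U : Clopens V) (f : C(V, ℤ)) (v : V) :
    U.indicator f v = (U : Set V).indicator f v :=
  rfl

lemma indicator_top (f : C(V, ℤ)) : (⊤ : Clopens V).indicator f = f := by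
  ext v; simp

lemma indicator_bot (f : C(V, ℤ)) : (⊥ : Clopens V).indicator f = 0 := by
  ext v; simp

lemma indicator_add_indicator_compl (U : Clopens V) (f : C(V, ℤ)) :
    U.indicator f + Uᶜ.indicator f = f := by
  ext v; simp [Set.indicator_self_add_compl_apply]

lemma indicator_inf_indicator {f g : C(V, ℤ)} (hf : 0 ≤ f) (hg : 0 ≤ g) (U U' : Clopens V) :
    U.indicator f ⊓ U'.indicator g = (U ⊓ U').indicator (f ⊓ g) := by
  ext v
  have hfv : 0 ≤ f v := hf v
  have hgv : 0 ≤ g v := hg v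
  by_cases hU : v ∈ U <;> by_cases hU' : v ∈ U' <;> simp [hU, hU', hfv, hgv]

end TopologicalSpace.Clopens

namespace AddMonoidHom

open Clopens

variable {V : Type*} [TopologicalSpace V] {φ : C(V, ℤ) →+ ℤ} {u : C(V, ℤ)}

lemma map_indicator_eq_zero_or_eq (hφ : ∀ f g, φ (f ⊓ g) = φ f ⊓ φ g) (hu : 0 ≤ u)
    (U : Clopens V) : φ (U.indicator u) = 0 ∨ φ (U.indicator u) = φ u := by
  have hsum : φ (U.indicator u) + φ (Uᶜ.indicator u) = φ u := by
    rw [← map_add, indicator_add_indicator_compl]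
  have hinf : φ (U.indicator u) ⊓ φ (Uᶜ.indicator u) = 0 := by
    rw [← hφ, indicator_inf_indicator hu hu, inf_compl_eq_bot, indicator_bot, map_zero]
  rcases min_choice (φ (U.indicator u)) (φ (Uᶜ.indicator u)) with hmin | hmin <;> omega

lemma map_indicator_inf_eq (hφ : ∀ f g, φ (f ⊓ g) = φ f ⊓ φ g) (hu : 0 ≤ u)
    {U U' : Clopens V} (hU : φ (U.indicator u) = φ u) (hU' : φ (U'.indicator u) = φ u) :
    φ ((U ⊓ U').indicator u) = φ u := by
  rw [← inf_idem u, ← indicator_inf_indicator hu hu, hφ, hU, hU', inf_idem, inf_idem]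

lemma exists_mem_of_map_indicator_eq [CompactSpace V] (hφ : ∀ f g, φ (f ⊓ g) = φ f ⊓ φ g)
    (hu : 0 ≤ u) (hpos : 0 < φ u) :
    ∃ y, ∀ U : Clopens V, φ (U.indicator u) = φ u → y ∈ U := by
  let S : Set (Set V) := SetLike.coe '' {U : Clopens V | φ (U.indicator u) = φ u}
  have hS : Nonempty S := ⟨⟨_, ⊤, congrArg φ (indicator_top u), rfl⟩⟩
  have hdir : DirectedOn (· ⊇ ·) S := by
    rintro _ ⟨U, hU, rfl⟩ _ ⟨U', hU', rfl⟩
    exact ⟨_, ⟨U ⊓ U', map_indicator_inf_eq hφ hu hU hU', rfl⟩, inter_subset_left,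
      inter_subset_right⟩
  have hne : ∀ s ∈ S, s.Nonempty := by
    rintro _ ⟨U, hU, rfl⟩
    refine nonempty_iff_ne_empty.2 fun h ↦ hpos.ne' ?_
    rw [← hU, SetLike.coe_set_eq.1 (h.trans Clopens.coe_bot.symm), indicator_bot, map_zero]
  obtain ⟨y, hy⟩ := IsCompact.nonempty_sInter_of_directed_nonempty_isCompact_isClosed hdir hne
    (by rintro _ ⟨U, -, rfl⟩; exact U.isClopen.isClosed.isCompact)
    (by rintro _ ⟨U, -, rfl⟩; exact U.isClopen.isClosed)
  exact ⟨y, fun U hU ↦ hy _ ⟨U, hU, rfl⟩⟩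

lemma exists_forall_mem_iff [CompactSpace V] (hφ : ∀ f g, φ (f ⊓ g) = φ f ⊓ φ g)
    (hu : 0 ≤ u) (hpos : 0 < φ u) :
    ∃ y, ∀ U : Clopens V, y ∈ U ↔ φ (U.indicator u) = φ u := by
  obtain ⟨y, hy⟩ := exists_mem_of_map_indicator_eq hφ hu hpos
  refine ⟨y, fun U ↦ ⟨fun hyU ↦ ?_, hy U⟩⟩
  refine (map_indicator_eq_zero_or_eq hφ hu U).resolve_left fun h0 ↦ hy Uᶜ ?_ hyU
  simpa [h0] using congrArg φ (indicator_add_indicator_compl U u)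

lemma map_eq_zero_of_eqOn_zero (hφ : ∀ f g, φ (f ⊓ g) = φ f ⊓ φ g) (hu : 0 ≤ u)
    (hpos : 0 < φ u) {U : Clopens V} (hU : φ (U.indicator u) = φ u) {h : C(V, ℤ)}
    (h0 : 0 ≤ h) (hh : EqOn h 0 U) : φ h = 0 := by
  have hcompl : Uᶜ.indicator h = h := by
    ext v
    by_cases hv : v ∈ U
    · simpa [hv] using (hh hv).symm
    · simp [hv]
  have hinf : φ h ⊓ φ u = 0 := by
    rw [← hU, ← hφ, ← hcompl, indicator_inf_indicator h0 hu, compl_inf_eq_bot, indicator_bot,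
      map_zero]
  have hnonneg : 0 ≤ φ h := map_zero φ ▸ Monotone.of_map_inf hφ h0
  rcases min_choice (φ h) (φ u) with hmin | hmin <;> omega

lemma map_eq_of_eqOn (hφ : ∀ f g, φ (f ⊓ g) = φ f ⊓ φ g) (hu : 0 ≤ u)
    (hpos : 0 < φ u) {U : Clopens V} (hU : φ (U.indicator u) = φ u) {f g : C(V, ℤ)}
    (hfg : EqOn f g U) : φ f = φ g := by
  have hpart : ∀ {h : C(V, ℤ)}, EqOn h 0 U → EqOn (h ⊔ 0) 0 U :=
    fun hh v hv ↦ by simp [hh hv]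
  have hdiff : EqOn (f - g) 0 U := fun v hv ↦ by simp [hfg hv]
  have hneg : EqOn (-(f - g)) 0 U := fun v hv ↦ by simp [hfg hv]
  rw [← sub_eq_zero, ← map_sub, ← posPart_sub_negPart (f - g), map_sub, posPart_def, negPart_def,
    map_eq_zero_of_eqOn_zero hφ hu hpos hU le_sup_right (hpart hdiff),
    map_eq_zero_of_eqOn_zero hφ hu hpos hU le_sup_right (hpart hneg), sub_zero]

lemma map_mul_eq_mul (hφ : ∀ f g, φ (f ⊓ g) = φ f ⊓ φ g) (hu : 0 ≤ u) (hpos : 0 < φ u)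
    {y : V} (hy : ∀ U : Clopens V, y ∈ U → φ (U.indicator u) = φ u) (f : C(V, ℤ)) :
    φ f * u y = f y * φ u := by
  -- on the clopen set where `f` and `u` take their values at `y`, `u y • f = f y • u`
  let U : Clopens V := ⟨f ⁻¹' {f y} ∩ u ⁻¹' {u y},
    ((isClopen_discrete _).preimage f.continuous).inter
      ((isClopen_discrete _).preimage u.continuous)⟩
  have hU : φ (U.indicator u) = φ u := hy U ⟨rfl, rfl⟩
  have hEq : EqOn ⇑(u y • f) ⇑(f y • U.indicator u) U := fun v hv ↦ by
    rw [ContinuousMap.smul_apply, ContinuousMap.smul_apply, Clopens.indicator_apply,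
      Set.indicator_of_mem hv, (hv.1 : f v = f y), (hv.2 : u v = u y), smul_eq_mul, smul_eq_mul,
      mul_comm]
  have := map_eq_of_eqOn hφ hu hpos hU hEq
  rwa [map_zsmul, map_zsmul, hU, smul_eq_mul, smul_eq_mul, mul_comm] at this

lemma map_indicator_eq_of_map_mul_eq_mul {y : V} (h : ∀ f, φ f * u y = f y * φ u)
    (hy : 0 < u y) {U : Clopens V} (hyU : y ∈ U) : φ (U.indicator u) = φ u := by
  have := h (U.indicator u)
  rw [Clopens.indicator_apply, Set.indicator_of_mem hyU, mul_comm (u y)] at this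
  exact mul_right_cancel₀ hy.ne' this

lemma eq_of_map_mul_eq_mul [TotallySeparatedSpace V] {y y' : V}
    (hy : ∀ U : Clopens V, y ∈ U ↔ φ (U.indicator u) = φ u)
    (hy' : ∀ f, φ f * u y' = f y' * φ u) (hpos : 0 < u y') : y' = y := by
  by_contra hne
  obtain ⟨U, hU, hy'U, hyU⟩ := exists_isClopen_of_totally_separated hne
  exact hyU <| (hy ⟨U, hU⟩).2 <|
    map_indicator_eq_of_map_mul_eq_mul (U := ⟨U, hU⟩) hy' hpos hy'U

end AddMonoidHom

lemma continuous_of_forall_isOpen_preimage_clopens {W V : Type*} [TopologicalSpace W]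
    [TopologicalSpace V] [CompactSpace V] [T2Space V] [TotallyDisconnectedSpace V] {γ : W → V}
    (h : ∀ U : Clopens V, IsOpen (γ ⁻¹' U)) : Continuous γ :=
  isTopologicalBasis_isClopen.continuous_iff.2 fun U hU ↦ h ⟨U, hU⟩

lemma isOpen_setOf_apply_eq {W : Type*} [TopologicalSpace W] (f g : C(W, ℤ)) :
    IsOpen {x | f x = g x} :=
  (isOpen_discrete {p : ℤ × ℤ | p.1 = p.2}).preimage (f.continuous.prodMk g.continuous)

theorem stmt15_general {W V : Type*}
    [TopologicalSpace W]
    [TopologicalSpace V] [CompactSpace V] [T2Space V] [TotallyDisconnectedSpace V]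
    (uW : C(W, ℤ)) (uV : C(V, ℤ))
    (huW : ∀ x : W, 1 ≤ uW x) (huV : ∀ y : V, 1 ≤ uV y)
    (ψ : C(V, ℤ) → C(W, ℤ))
    (hadd : ∀ f g : C(V, ℤ), ψ (f + g) = ψ f + ψ g)
    (hinf : ∀ f g : C(V, ℤ), ψ (f ⊓ g) = ψ f ⊓ ψ g)
    (hunit : ψ uV = uW) :
    ∃! γ : C(W, V), (∀ x : W, uV (γ x) ∣ uW x) ∧
      ∀ (f : C(V, ℤ)) (x : W), ψ f x * uV (γ x) = f (γ x) * uW x := by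
  let φ (x : W) : C(V, ℤ) →+ ℤ := AddMonoidHom.mk' (ψ · x) fun f g ↦ by simp [hadd]
  have hφ (x : W) f g : φ x (f ⊓ g) = φ x f ⊓ φ x g := by simp [φ, hinf]
  have hφu (x : W) : φ x uV = uW x := by simp [φ, hunit]
  have huV0 : 0 ≤ uV := fun y ↦ zero_le_one.trans (huV y)
  have hpos (x : W) : 0 < φ x uV := hφu x ▸ huW x
  choose γ hγ using fun x ↦ AddMonoidHom.exists_forall_mem_iff (hφ x) huV0 (hpos x)
  have hcont : Continuous γ := continuous_of_forall_isOpen_preimage_clopens fun U ↦ by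
    simpa [Set.preimage, hγ, φ, hunit] using isOpen_setOf_apply_eq (ψ (U.indicator uV)) uW
  have key (f : C(V, ℤ)) (x : W) : ψ f x * uV (γ x) = f (γ x) * uW x := by
    simpa [φ, hunit] using
      AddMonoidHom.map_mul_eq_mul (hφ x) huV0 (hpos x) (fun U ↦ (hγ x U).1) f
  refine ⟨⟨γ, hcont⟩, ⟨fun x ↦ ⟨ψ 1 x, ?_⟩, key⟩, ?_⟩
  · simpa [mul_comm] using (key 1 x).symm
  · rintro γ' ⟨-, hγ'⟩
    ext x
    exact AddMonoidHom.eq_of_map_mul_eq_mul (hγ x) (fun f ↦ by simpa [φ, hunit] using hγ' f x)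
      (zero_lt_one.trans_le (huV _))

/-- Every unital ℓ-homomorphism `ψ : C(V, ℤ) → C(W, ℤ)` between the
ℓ-groups of continuous integer-valued functions on boolean spaces, with
units `u_V` and `u_W`, is induced by a unique continuous multiplicity-decreasing
map `γ : W → V`. -/
theorem stmt15 {W V : Type*}
    [TopologicalSpace W] [CompactSpace W] [T2Space W] [TotallyDisconnectedSpace W]
    [TopologicalSpace V] [CompactSpace V] [T2Space V] [TotallyDisconnectedSpace V]
    (uW : C(W, ℤ)) (uV : C(V, ℤ))
    (huW : ∀ x : W, 1 ≤ uW x) (huV : ∀ y : V, 1 ≤ uV y)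
    (ψ : C(V, ℤ) → C(W, ℤ))
    (hadd : ∀ f g : C(V, ℤ), ψ (f + g) = ψ f + ψ g)
    (hsup : ∀ f g : C(V, ℤ), ψ (f ⊔ g) = ψ f ⊔ ψ g)
    (hinf : ∀ f g : C(V, ℤ), ψ (f ⊓ g) = ψ f ⊓ ψ g)
    (hunit : ψ uV = uW) :
    ∃! γ : C(W, V), (∀ x : W, uV (γ x) ∣ uW x) ∧
      ∀ (f : C(V, ℤ)) (x : W), ψ f x * uV (γ x) = f (γ x) * uW x :=
  stmt15_general uW uV huW huV ψ hadd hinf hunit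
end

section
/- Consider the boolean multispace (Bool, u₀) where Bool carries the discrete topology and u₀(false) = 1, u₀(true) = 2. There do not exist a boolean multispace (P, v) and a family of Bms-morphisms p_i : (P, v) → (Bool, u₀) indexed by i ∈ ℕ such that for every boolean multispace (Q, w) and every family of Bms-morphisms q_i : (Q, w) → (Bool, u₀), i ∈ ℕ, there is a unique Bms-morphism h : (Q, w) → (P, v) with p_i ∘ h = q_i for all i ∈ ℕ. (The category of boolean multispaces lacks the countable power of (Bool, u₀).) -/
/-!
If `(P, v)` were the countable power, the Cantor space `ℕ → Bool` with constant multiplicity `2`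
would map to it by some `h`. Uniqueness of the morphism from the point of multiplicity `2` forces
`h` to send the constant sequence `false` to the image of the point of multiplicity `1`, where
`v = 1`. But the indicator sequences `eₙ` of `{n}` converge to it while `2 ∣ v (h eₙ)`,
contradicting the local constancy of `v ∘ h`.
-/

/-- The multiplicity function on `Bool` with `u₀ false = 1` and `u₀ true = 2`. -/
def u₀ : Bool → ℤ := fun b => if b then 2 else 1

open Filter Topology

def IsBmsCountablePower {P : Type} [TopologicalSpace P] (v : P → ℤ) (p : ℕ → P → Bool) : Prop :=
  ∀ (Q : Type) [TopologicalSpace Q] [CompactSpace Q] [T2Space Q] [TotallyDisconnectedSpace Q]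
    (w : Q → ℤ), Continuous w → (∀ y : Q, 1 ≤ w y) →
    ∀ q : ℕ → Q → Bool, (∀ i, Continuous (q i)) → (∀ (i : ℕ) (y : Q), u₀ (q i y) ∣ w y) →
      ∃! h : Q → P, Continuous h ∧ (∀ y : Q, v (h y) ∣ w y) ∧ ∀ i : ℕ, p i ∘ h = q i

theorem IsBmsCountablePower.eq_one_of_forall_eq_false {P : Type} [TopologicalSpace P]
    {v : P → ℤ} {p : ℕ → P → Bool} (H : IsBmsCountablePower v p) (hv : ∀ x, 1 ≤ v x) {x : P}
    (hx : ∀ i, p i x = false) (hx2 : v x ∣ 2) : v x = 1 := by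
  have hu₀ : ∀ (w : ℤ) (i : ℕ) (_ : Unit), u₀ false ∣ w := fun _ _ _ => one_dvd _
  obtain ⟨x₀, ⟨hx₀c, hx₀v, hx₀p⟩, -⟩ := H Unit (fun _ => 1) continuous_const (fun _ => le_rfl)
    (fun _ _ => false) (fun _ => continuous_const) (hu₀ 1)
  have hx_eq : (fun _ => x) = x₀ :=
    (H Unit (fun _ => 2) continuous_const (fun _ => one_le_two) (fun _ _ => false)
      (fun _ => continuous_const) (hu₀ 2)).unique
      ⟨continuous_const, fun _ => hx2, fun i => funext fun _ => hx i⟩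
      ⟨hx₀c, fun y => (hx₀v y).trans (one_dvd 2), hx₀p⟩
  have hx1 : v x ∣ 1 := congrFun hx_eq () ▸ hx₀v ()
  exact Int.eq_one_of_dvd_one (zero_le_one.trans (hv x)) hx1

theorem tendsto_decide_eq_atTop :
    Tendsto (fun n : ℕ => fun i => decide (i = n)) atTop (𝓝 fun _ => false) := by
  refine tendsto_pi_nhds.2 fun i => tendsto_const_nhds.congr' ?_
  filter_upwards [eventually_gt_atTop i] with n hn
  simp [hn.ne]

theorem Continuous.eventually_eq_of_tendsto {X Y ι : Type*} [TopologicalSpace X]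
    [TopologicalSpace Y] [DiscreteTopology Y] {f : X → Y} (hf : Continuous f) {l : Filter ι}
    {x : ι → X} {a : X} (hx : Tendsto x l (𝓝 a)) : ∀ᶠ n in l, f (x n) = f a := by
  simpa [nhds_discrete] using (hf.tendsto a).comp hx

/-- The category of boolean multispaces lacks the countable power of
`(Bool, u₀)`: there is no boolean multispace `(P, v)` with a countable family of
Bms-morphisms to `(Bool, u₀)` enjoying the universal property of the product. -/
theorem stmt17 :
    ¬ ∃ (P : Type) (_ : TopologicalSpace P) (_ : CompactSpace P) (_ : T2Space P)
        (_ : TotallyDisconnectedSpace P) (v : P → ℤ) (_ : Continuous v)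
        (_ : ∀ x : P, 1 ≤ v x) (p : ℕ → P → Bool) (_ : ∀ i, Continuous (p i))
        (_ : ∀ (i : ℕ) (x : P), u₀ (p i x) ∣ v x),
      ∀ (Q : Type) (_ : TopologicalSpace Q) (_ : CompactSpace Q) (_ : T2Space Q)
        (_ : TotallyDisconnectedSpace Q) (w : Q → ℤ),
        Continuous w → (∀ y : Q, 1 ≤ w y) →
        ∀ q : ℕ → Q → Bool, (∀ i, Continuous (q i)) →
          (∀ (i : ℕ) (y : Q), u₀ (q i y) ∣ w y) →
          ∃! h : Q → P, Continuous h ∧ (∀ y : Q, v (h y) ∣ w y) ∧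
            ∀ i : ℕ, p i ∘ h = q i := by
  rintro ⟨P, _, _, _, _, v, hv, hv1, p, -, hpv, H⟩
  have H : IsBmsCountablePower v p := H
  obtain ⟨h, ⟨hc, hhv, hph⟩, -⟩ := H (ℕ → Bool) (fun _ => 2) continuous_const
    (fun _ => one_le_two) (fun i f => f i) continuous_apply
    (fun i f => by cases f i <;> decide)
  have hzero : v (h fun _ => false) = 1 :=
    H.eq_one_of_forall_eq_false hv1 (fun i => congrFun (hph i) _) (hhv _)
  have hunit (n : ℕ) : 2 ∣ v (h fun i => decide (i = n)) := by
    have hpn : p n (h fun i => decide (i = n)) = true := by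
      simpa using congrFun (hph n) fun i => decide (i = n)
    simpa [hpn, u₀] using hpv n (h fun i => decide (i = n))
  obtain ⟨n, hn⟩ := ((hv.comp hc).eventually_eq_of_tendsto tendsto_decide_eq_atTop).exists
  rw [Function.comp_apply, Function.comp_apply, hzero] at hn
  exact absurd (hn ▸ hunit n) (by decide)
end

section
/- Let (X, u) and (X', u') be boolean multispaces and define v : X × X' → ℤ by v(x, x') = lcm(u(x), u'(x')). Then (X × X', v) is a boolean multispace (in particular, v is continuous), the coordinate projections π₁ : (X × X', v) → (X, u) and π₂ : (X × X', v) → (X', u') are Bms-morphisms, and for every boolean multispace (Q, w) and all Bms-morphisms f : (Q, w) → (X, u) and f' : (Q, w) → (X', u') there exists a unique Bms-morphism h : (Q, w) → (X × X', v) with π₁ ∘ h = f and π₂ ∘ h = f'. (Thus (X × X', v) is the categorical product of (X, u) and (X', u') in the category of boolean multispaces.) -/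
theorem Continuous.intLcm {α : Type*} [TopologicalSpace α] {f g : α → ℤ}
    (hf : Continuous f) (hg : Continuous g) :
    Continuous fun a => (Int.lcm (f a) (g a) : ℤ) :=
  (continuous_of_discreteTopology (f := fun p : ℤ × ℤ => (Int.lcm p.1 p.2 : ℤ))).comp₂ hf hg

theorem Int.one_le_lcm {a b : ℤ} (ha : 1 ≤ a) (hb : 1 ≤ b) : 1 ≤ (Int.lcm a b : ℤ) := by
  exact_mod_cast Int.lcm_pos (by omega) (by omega)

theorem stmt19_general {X X' : Type*}
    [TopologicalSpace X]
    [TopologicalSpace X']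
    (u : X → ℤ) (u' : X' → ℤ) (hu : Continuous u) (hu' : Continuous u')
    (hu1 : ∀ x : X, 1 ≤ u x) (hu'1 : ∀ x : X', 1 ≤ u' x) :
    Continuous (fun z : X × X' => (Int.lcm (u z.1) (u' z.2) : ℤ)) ∧
    (∀ z : X × X', 1 ≤ (Int.lcm (u z.1) (u' z.2) : ℤ)) ∧
    (∀ z : X × X', u z.1 ∣ (Int.lcm (u z.1) (u' z.2) : ℤ)) ∧
    (∀ z : X × X', u' z.2 ∣ (Int.lcm (u z.1) (u' z.2) : ℤ)) ∧
    ∀ (Q : Type*) (_ : TopologicalSpace Q) (_ : CompactSpace Q) (_ : T2Space Q)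
      (_ : TotallyDisconnectedSpace Q) (w : Q → ℤ),
      Continuous w → (∀ y : Q, 1 ≤ w y) →
      ∀ (f : Q → X) (f' : Q → X'), Continuous f → Continuous f' →
        (∀ y : Q, u (f y) ∣ w y) → (∀ y : Q, u' (f' y) ∣ w y) →
        ∃! h : Q → X × X', Continuous h ∧
          (∀ y : Q, (Int.lcm (u (h y).1) (u' (h y).2) : ℤ) ∣ w y) ∧
          Prod.fst ∘ h = f ∧ Prod.snd ∘ h = f' := by
  refine ⟨(hu.comp continuous_fst).intLcm (hu'.comp continuous_snd),
    fun z => Int.one_le_lcm (hu1 z.1) (hu'1 z.2), fun z => Int.dvd_lcm_left _ _,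
    fun z => Int.dvd_lcm_right _ _, ?_⟩
  intro Q _ _ _ _ w _ _ f f' hf hf' hdf hdf'
  refine ⟨fun y => (f y, f' y),
    ⟨hf.prodMk hf', fun y => Int.coe_lcm_dvd (hdf y) (hdf' y), rfl, rfl⟩, ?_⟩
  rintro h ⟨-, -, rfl, rfl⟩
  rfl

/-- The product of two boolean multispaces `(X, u)` and `(X', u')` in the
category of boolean multispaces is `(X × X', lcm(u, u'))` with the coordinate
projections. -/
theorem stmt19 {X X' : Type*}
    [TopologicalSpace X] [CompactSpace X] [T2Space X] [TotallyDisconnectedSpace X]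
    [TopologicalSpace X'] [CompactSpace X'] [T2Space X'] [TotallyDisconnectedSpace X']
    (u : X → ℤ) (u' : X' → ℤ) (hu : Continuous u) (hu' : Continuous u')
    (hu1 : ∀ x : X, 1 ≤ u x) (hu'1 : ∀ x : X', 1 ≤ u' x) :
    Continuous (fun z : X × X' => (Int.lcm (u z.1) (u' z.2) : ℤ)) ∧
    (∀ z : X × X', 1 ≤ (Int.lcm (u z.1) (u' z.2) : ℤ)) ∧
    (∀ z : X × X', u z.1 ∣ (Int.lcm (u z.1) (u' z.2) : ℤ)) ∧
    (∀ z : X × X', u' z.2 ∣ (Int.lcm (u z.1) (u' z.2) : ℤ)) ∧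
    ∀ (Q : Type*) (_ : TopologicalSpace Q) (_ : CompactSpace Q) (_ : T2Space Q)
      (_ : TotallyDisconnectedSpace Q) (w : Q → ℤ),
      Continuous w → (∀ y : Q, 1 ≤ w y) →
      ∀ (f : Q → X) (f' : Q → X'), Continuous f → Continuous f' →
        (∀ y : Q, u (f y) ∣ w y) → (∀ y : Q, u' (f' y) ∣ w y) →
        ∃! h : Q → X × X', Continuous h ∧
          (∀ y : Q, (Int.lcm (u (h y).1) (u' (h y).2) : ℤ) ∣ w y) ∧
          Prod.fst ∘ h = f ∧ Prod.snd ∘ h = f' :=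
  stmt19_general u u' hu hu' hu1 hu'1
end
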